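/- arXiv:2109.06718 — 6 statements merged into one kernel-verified Lean document; each statement's English description precedes it below -/
import Mathlib

section
/- For complex numbers x_1,...,x_M, y_1,...,y_M, s_1,...,s_M (with all denominators nonzero), the M×M determinant det[ (1/(y_{M-j+1} - x_i)) * ∏_{m=1}^{M-j} (y_m - s_m^2 x_i)/(s_m^2 (y_m - x_i)) ]_{i,j=1}^M equals ∏_{1≤i<j≤M} (x_i - x_j)(s_i^{-2} y_i - y_j) / ∏_{i,j=1}^M (y_i - x_j). -/
/-!
Write `a_m = s_m⁻² y_m`; then column `j` of the matrix is
`∏_{m=1}^{k} (a_m - x) / ∏_{m=1}^{k+1} (y_m - x)` at `x = x_i`, with `k = M - 1 - j`.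
Consecutive columns differ by the factor `(a_k - x) / (y_{k+1} - x)`, so subtracting from each column
a multiple of its right neighbour clears the row of `x_M` except for its last entry `1 / (y_1 - x_M)`.
Every other cleared column factors as a row scalar times a column scalar times the same kind of
column for the shifted sequence `y_2, y_3, …`, so expanding along that row gives a recursion in `M`.
-/

open Finset Matrix

namespace Finset

variable {M : Type*} [CommMonoid M]

theorem prod_Icc_one_eq_prod_range (f : ℕ → M) (n : ℕ) :
    ∏ m ∈ Icc 1 n, f m = ∏ m ∈ range n, f (m + 1) := by
  rw [range_eq_Ico, prod_Ico_add', ← Ico_add_one_right_eq_Icc, zero_add]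

theorem prod_Icc_one_prod_Icc_add_one_eq_prod_range_prod_range (f : ℕ → ℕ → M) (n : ℕ) :
    ∏ i ∈ Icc 1 n, ∏ j ∈ Icc (i + 1) n, f i j =
      ∏ j ∈ range n, ∏ i ∈ range j, f (i + 1) (j + 1) := by
  rw [prod_comm' (t' := Icc 1 n) (s' := fun j => Icc 1 (j - 1)) (by intros; simp; omega),
    prod_Icc_one_eq_prod_range]
  simp_rw [Nat.add_sub_cancel, prod_Icc_one_eq_prod_range]

end Finset

namespace Matrix

variable {R : Type*} [CommRing R] {n : ℕ}

theorem det_eq_of_forall_col_eq_add_smul_succ {A B : Matrix (Fin (n + 1)) (Fin (n + 1)) R}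
    (c : Fin n → R) (A_last : ∀ i, A i (Fin.last n) = B i (Fin.last n))
    (A_castSucc : ∀ (i) (j : Fin n), A i j.castSucc = B i j.castSucc + c j * A i j.succ) :
    det A = det B := by
  rw [← det_submatrix_equiv_self Fin.revPerm A, ← det_submatrix_equiv_self Fin.revPerm B]
  refine det_eq_of_forall_col_eq_smul_add_pred (c ∘ Fin.rev) (fun i => ?_) (fun i j => ?_)
  · simpa using A_last _
  · simpa [Fin.rev_succ, Fin.rev_castSucc] using A_castSucc (Fin.rev i) (Fin.rev j)

theorem det_succ_of_forall_last_row_eq_zero {A : Matrix (Fin (n + 1)) (Fin (n + 1)) R}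
    (h : ∀ j : Fin n, A (Fin.last n) j.castSucc = 0) :
    det A = A (Fin.last n) (Fin.last n) * det (A.submatrix Fin.castSucc Fin.castSucc) := by
  rw [det_succ_row A (Fin.last n), Fin.sum_univ_castSucc]
  simp [h]

end Matrix

section DeformedCauchy

variable {K : Type*} [Field K] (a b : ℕ → K)

/-- Indexed from `0`: `a m`, `b m` stand for `s_{m+1}⁻² y_{m+1}`, `y_{m+1}` of the theorem. -/
def deformedCauchyEntry (k : ℕ) (t : K) : K :=
  (∏ m ∈ range k, (a m - t)) / ∏ m ∈ range (k + 1), (b m - t)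

def deformedCauchyMatrix (x : ℕ → K) (n : ℕ) : Matrix (Fin n) (Fin n) K :=
  of fun i j => deformedCauchyEntry a b j.rev (x i)

theorem deformedCauchyEntry_eq_inv_mul_prod (k : ℕ) (t : K) :
    deformedCauchyEntry a b k t = (b k - t)⁻¹ * ∏ m ∈ range k, (a m - t) / (b m - t) := by
  rw [deformedCauchyEntry, prod_range_succ, prod_div_distrib, div_mul_eq_div_div, div_eq_inv_mul]

/-- The column operation of the induction step: the remainder vanishes at `t = z`. -/
theorem deformedCauchyEntry_succ {k : ℕ} {t : K} (z : K) (ht : ∀ m ≤ k + 1, b m ≠ t)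
    (hz : b (k + 1) ≠ z) :
    deformedCauchyEntry a b (k + 1) t =
      (t - z) / (b 0 - t) * ((a k - b (k + 1)) / (b (k + 1) - z) *
          deformedCauchyEntry a (fun m => b (m + 1)) k t) +
        (a k - z) / (b (k + 1) - z) * deformedCauchyEntry a b k t := by
  have hb : ∀ m ≤ k + 1, b m - t ≠ 0 := fun m hm => sub_ne_zero.2 (ht m hm)
  have hQ : ∏ m ∈ range k, (b (m + 1) - t) ≠ 0 :=
    prod_ne_zero_iff.2 fun m hm => hb _ (by simp at hm; omega)
  have := hb 0 (by omega)
  have := hb (k + 1) le_rfl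
  have := sub_ne_zero.2 hz
  simp only [deformedCauchyEntry, prod_range_succ' (fun m => b m - t),
    prod_range_succ (fun m => b (m + 1) - t), prod_range_succ (fun m => a m - t)]
  field_simp
  ring

theorem det_deformedCauchyMatrix_succ (x : ℕ → K) (n : ℕ) (h : ∀ i ≤ n, ∀ j ≤ n, b i ≠ x j) :
    det (deformedCauchyMatrix a b x (n + 1)) =
      (∏ i ∈ range n, (x i - x n) / (b 0 - x i)) *
        (∏ k ∈ range n, (a k - b (k + 1)) / (b (k + 1) - x n)) / (b 0 - x n) *
          det (deformedCauchyMatrix a (fun m => b (m + 1)) x n) := by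
  let r : ℕ → K := fun i => (x i - x n) / (b 0 - x i)
  let c : Fin n → K := fun j => (a j.rev - b (j.rev + 1)) / (b (j.rev + 1) - x n)
  let B : Matrix (Fin (n + 1)) (Fin (n + 1)) K := of fun i =>
    Fin.lastCases (deformedCauchyEntry a b 0 (x i))
      fun j => r i * (c j * deformedCauchyEntry a (fun m => b (m + 1)) j.rev (x i))
  have hcol : ∀ i (j : Fin n), deformedCauchyMatrix a b x (n + 1) i j.castSucc =
      B i j.castSucc +
        (a j.rev - x n) / (b (j.rev + 1) - x n) * deformedCauchyMatrix a b x (n + 1) i j.succ := by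
    intro i j
    have hj := j.rev.isLt
    simp only [deformedCauchyMatrix, B, of_apply, Fin.rev_castSucc, Fin.rev_succ, Fin.val_succ,
      Fin.val_castSucc, Fin.lastCases_castSucc]
    exact deformedCauchyEntry_succ a b (x n) (fun m hm => h m (by omega) i (by omega))
      (h _ (by omega) n le_rfl)
  have hrow : ∀ j : Fin n, B (Fin.last n) j.castSucc = 0 := fun j => by simp [B, r]
  have hcorner : B (Fin.last n) (Fin.last n) = (b 0 - x n)⁻¹ := by simp [B, deformedCauchyEntry]
  have hminor : det (B.submatrix Fin.castSucc Fin.castSucc) =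
      (∏ i : Fin n, r i) * ((∏ j, c j) * det (deformedCauchyMatrix a (fun m => b (m + 1)) x n)) := by
    rw [← det_mul_row, ← det_mul_column]
    congr
    ext i j
    simp [B, deformedCauchyMatrix]
  have hc : ∏ j, c j = ∏ k ∈ range n, (a k - b (k + 1)) / (b (k + 1) - x n) :=
    (Equiv.prod_comp Fin.revPerm fun j : Fin n => (a j - b (j + 1)) / (b (j + 1) - x n)).trans
      (Fin.prod_univ_eq_prod_range (fun k => (a k - b (k + 1)) / (b (k + 1) - x n)) n)
  rw [det_eq_of_forall_col_eq_add_smul_succ _ (fun i => by simp [deformedCauchyMatrix, B]) hcol,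
    det_succ_of_forall_last_row_eq_zero hrow, hcorner, hminor, hc, Fin.prod_univ_eq_prod_range r n]
  ring

theorem det_deformedCauchyMatrix (x : ℕ → K) (n : ℕ) (h : ∀ i < n, ∀ j < n, b i ≠ x j) :
    det (deformedCauchyMatrix a b x n) =
      (∏ j ∈ range n, ∏ i ∈ range j, (x i - x j) * (a i - b j)) /
        ∏ i ∈ range n, ∏ j ∈ range n, (b i - x j) := by
  induction n generalizing b with
  | zero => simp
  | succ n ih =>
    rw [det_deformedCauchyMatrix_succ a b x n fun i hi j hj => h i (by omega) j (by omega),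
      ih _ fun i hi j hj => h (i + 1) (by omega) j (by omega)]
    simp only [prod_mul_distrib, prod_div_distrib]
    rw [prod_range_succ (fun j => ∏ i ∈ range j, (x i - x j)),
      prod_range_succ' (fun j => ∏ i ∈ range j, (a i - b j)),
      prod_range_succ' (fun i => ∏ j ∈ range (n + 1), (b i - x j))]
    simp only [prod_range_succ, prod_mul_distrib, prod_range_zero]
    -- otherwise `ring` expands `(b 0 - x n) * …` under an inverse and cannot cancel it
    generalize b 0 - x n = d
    ring

end DeformedCauchy

theorem deformed_cauchy_determinant_general (M : ℕ) (x y s : ℕ → ℂ)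
    (hyx : ∀ i ∈ Icc 1 M, ∀ j ∈ Icc 1 M, y i ≠ x j)
    (hs : ∀ m ∈ Icc 1 M, s m ≠ 0) :
    Matrix.det (Matrix.of fun i j : Fin M =>
        (y (M - (j : ℕ)) - x ((i : ℕ) + 1))⁻¹ *
          ∏ m ∈ Icc 1 (M - 1 - (j : ℕ)),
            (y m - s m ^ 2 * x ((i : ℕ) + 1)) / (s m ^ 2 * (y m - x ((i : ℕ) + 1)))) =
      (∏ i ∈ Icc 1 M, ∏ j ∈ Icc (i + 1) M,
          (x i - x j) * ((s i ^ 2)⁻¹ * y i - y j)) /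
        ∏ i ∈ Icc 1 M, ∏ j ∈ Icc 1 M, (y i - x j) := by
  have hdet := det_deformedCauchyMatrix (fun m => (s (m + 1) ^ 2)⁻¹ * y (m + 1))
    (fun m => y (m + 1)) (fun m => x (m + 1)) M
    fun i hi j hj => hyx (i + 1) (by simp; omega) (j + 1) (by simp; omega)
  rw [prod_Icc_one_prod_Icc_add_one_eq_prod_range_prod_range]
  simp_rw [prod_Icc_one_eq_prod_range]
  rw [← hdet]
  congr 1
  ext i j
  have hj := j.isLt
  rw [of_apply, deformedCauchyMatrix, of_apply, deformedCauchyEntry_eq_inv_mul_prod, Fin.val_rev,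
    show M - (j + 1) + 1 = M - j by omega, show M - (j + 1) = M - 1 - j by omega]
  congr 1
  refine prod_congr rfl fun m hm => ?_
  have := hs (m + 1) (by simp at hm ⊢; omega)
  field_simp

/-- The fully inhomogeneous deformation of the Cauchy determinant:
`det[ (1/(y_{M-j+1} - x_i)) ∏_{m=1}^{M-j} (y_m - s_m² x_i)/(s_m²(y_m - x_i)) ]_{i,j=1}^M
  = ∏_{1≤i<j≤M} (x_i - x_j)(s_i⁻² y_i - y_j) / ∏_{i,j=1}^M (y_i - x_j)`.
All sequences are indexed starting from `1`; rows and columns of the matrix are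
indexed by `Fin M` (so the `1`-based indices are `i+1`, `j+1`). -/
theorem deformed_cauchy_determinant (M : ℕ) (hM : 1 ≤ M) (x y s : ℕ → ℂ)
    (hyx : ∀ i ∈ Icc 1 M, ∀ j ∈ Icc 1 M, y i ≠ x j)
    (hs : ∀ m ∈ Icc 1 M, s m ≠ 0) :
    Matrix.det (Matrix.of fun i j : Fin M =>
        (y (M - (j : ℕ)) - x ((i : ℕ) + 1))⁻¹ *
          ∏ m ∈ Icc 1 (M - 1 - (j : ℕ)),
            (y m - s m ^ 2 * x ((i : ℕ) + 1)) / (s m ^ 2 * (y m - x ((i : ℕ) + 1)))) =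
      (∏ i ∈ Icc 1 M, ∏ j ∈ Icc (i + 1) M,
          (x i - x j) * ((s i ^ 2)⁻¹ * y i - y j)) /
        ∏ i ∈ Icc 1 M, ∏ j ∈ Icc 1 M, (y i - x j) :=
  deformed_cauchy_determinant_general M x y s hyx hs
end

section
/- Define φ_k(z) = (1/(y_{k+1} - z)) ∏_{j=1}^k (z - s_j^{-2} y_j)/(z - y_j) and ψ_l(z) = (y_{l+1}(s_{l+1}^2 - 1)/(y_{l+1} - s_{l+1}^2 z)) ∏_{j=1}^l (s_j^2 (y_j - z))/(y_j - s_j^2 z). Then for all integers k, l ≥ 0, the contour integral (1/(2πi)) ∮_γ φ_k(z) ψ_l(z) dz equals 1 if k = l and 0 otherwise, where γ is a positively oriented simple closed contour enclosing all points y_j and excluding all points s_j^{-2} y_j. -/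
/-! Write `a_j = s_j⁻² y_j`. Each factor of the product in `ψ_l` is the reciprocal of the
corresponding factor in `φ_k`, so on the contour `φ_k ψ_l` collapses to a rational function with
few poles. If `k < l`, all remaining poles are points `a_j` outside `γ`, and Cauchy's theorem gives
`0`. If `k = l`, what remains is `(y_{k+1} - a_{k+1}) / ((z - y_{k+1}) (z - a_{k+1}))`, whose only
pole inside `γ` is simple with residue `1`. If `k > l`, all remaining poles are points `y_j` inside
`γ` and the function is `O(z⁻²)` at infinity, so the integral equals the integral over arbitrarily
large circles, which tends to `0`. -/

open Finset Real

noncomputable section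

open Complex Metric Filter Bornology Topology

section RationalFactors

variable {𝕜 : Type*} [NontriviallyNormedField 𝕜] {ι : Type*}

theorem differentiableOn_prod_sub_div_sub (u : Finset ι) {p q : ι → 𝕜} {S : Set 𝕜}
    (hq : ∀ j ∈ u, q j ∉ S) : DifferentiableOn 𝕜 (fun z => ∏ j ∈ u, (z - p j) / (z - q j)) S :=
  DifferentiableOn.fun_finsetProd fun j hj =>
    (differentiableOn_id.sub_const _).div (differentiableOn_id.sub_const _) fun _ hz =>
      sub_ne_zero.2 (ne_of_mem_of_not_mem hz (hq j hj))

theorem tendsto_sub_div_sub_cobounded (p q : 𝕜) :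
    Tendsto (fun z => (z - p) / (z - q)) (cobounded 𝕜) (𝓝 1) := by
  have hlim : Tendsto (fun z => 1 + (q - p) * (z - q)⁻¹) (cobounded 𝕜) (𝓝 1) := by
    simpa using ((tendsto_inv₀_cobounded.comp (tendsto_sub_const_cobounded q)).const_mul
      (q - p)).const_add 1
  refine hlim.congr' ?_
  filter_upwards [eventually_ne_cobounded q] with z hz
  have hzq : z - q ≠ 0 := sub_ne_zero.2 hz
  field_simp
  ring

theorem tendsto_prod_sub_div_sub_cobounded (u : Finset ι) (p q : ι → 𝕜) :
    Tendsto (fun z => ∏ j ∈ u, (z - p j) / (z - q j)) (cobounded 𝕜) (𝓝 1) := by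
  simpa using tendsto_finsetProd u fun j _ => tendsto_sub_div_sub_cobounded (p j) (q j)

end RationalFactors

theorem Finset.prod_Icc_one_eq_mul_prod_Ioc {M : Type*} [CommMonoid M] (f : ℕ → M) {m n : ℕ}
    (h : m < n) :
    ∏ j ∈ Icc 1 n, f j = (∏ j ∈ Icc 1 m, f j) * f (m + 1) * ∏ j ∈ Ioc (m + 1) n, f j := by
  have hIcc : ∀ k, Icc 1 k = Ioc 0 k := fun k => Icc_add_one_left_eq_Ioc 0 k
  rw [hIcc, hIcc, ← prod_Ioc_consecutive f m.zero_le h.le,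
    ← prod_Ioc_consecutive f m.le_succ h, Nat.Ioc_succ_singleton, prod_singleton, mul_assoc]

theorem Finset.prod_div_eq_inv_prod_div {G ι : Type*} [DivisionCommMonoid G] (u : Finset ι)
    (p q : ι → G) : ∏ j ∈ u, q j / p j = (∏ j ∈ u, p j / q j)⁻¹ := by
  simp only [← prod_inv_distrib, inv_div]

theorem mul_sub_div_sub_mul_eq_sub_div_sub_inv_mul {K : Type*} [Field K] {t : K} (ht : t ≠ 0)
    (y z : K) : t * (y - z) / (y - t * z) = (z - y) / (z - t⁻¹ * y) := by
  rw [show t * (y - z) = -t * (z - y) by ring,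
    show y - t * z = -t * (z - t⁻¹ * y) by field_simp; ring,
    mul_div_mul_left _ _ (neg_ne_zero.2 ht)]

theorem mul_sub_one_div_sub_mul_eq_sub_div_inv_mul_sub {K : Type*} [Field K] {t : K} (ht : t ≠ 0)
    (y z : K) : y * (t - 1) / (y - t * z) = (y - t⁻¹ * y) / (t⁻¹ * y - z) := by
  rw [show y * (t - 1) = t * (y - t⁻¹ * y) by field_simp,
    show y - t * z = t * (t⁻¹ * y - z) by field_simp, mul_div_mul_left _ _ ht]

theorem Complex.circleIntegral_eq_zero_of_differentiableOn_compl_ball {E : Type*}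
    [NormedAddCommGroup E] [NormedSpace ℂ E] {f : ℂ → E} {c : ℂ} {R : ℝ} (hR : 0 < R)
    (hd : DifferentiableOn ℂ f (ball c R)ᶜ)
    (hlim : Tendsto (fun z => (z - c) • f z) (cobounded ℂ) (𝓝 0)) :
    ∮ z in C(c, R), f z = 0 := by
  rw [← norm_le_zero_iff]
  refine le_of_forall_pos_le_add fun ε hε => ?_
  obtain ⟨M, -, hM⟩ := (hasBasis_cobounded_compl_closedBall c).tendsto_left_iff.1 hlim _
    (closedBall_mem_nhds 0 (div_pos hε two_pi_pos))
  set r := max R (M + 1)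
  have hr : 0 < r := hR.trans_le (le_max_left _ _)
  have hnhds : ∀ z ∉ closedBall c R, (ball c R)ᶜ ∈ 𝓝 z := fun z hz =>
    mem_of_superset (isClosed_closedBall.isOpen_compl.mem_nhds hz)
      (Set.compl_subset_compl.2 ball_subset_closedBall)
  have hannulus : ∮ z in C(c, r), f z = ∮ z in C(c, R), f z :=
    circleIntegral_eq_of_differentiable_on_annulus_off_countable hR (le_max_left _ _)
      Set.countable_empty (hd.continuousOn.mono fun z hz => hz.2)
      fun z hz => hd.differentiableAt (hnhds z hz.1.2)
  have hbound : ∀ z ∈ sphere c r, ‖f z‖ ≤ ε / (2 * π) / r := by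
    intro z hz
    have hzr : ‖z - c‖ = r := mem_sphere_iff_norm.1 hz
    have hzM : z ∉ closedBall c M := by
      rw [mem_closedBall_iff_norm, hzr, not_le]
      exact (lt_add_one M).trans_le (le_max_right _ _)
    have := mem_closedBall_zero_iff.1 (hM hzM)
    rw [norm_smul, hzr] at this
    rwa [le_div_iff₀ hr, mul_comm]
  calc ‖∮ z in C(c, R), f z‖ = ‖∮ z in C(c, r), f z‖ := by rw [hannulus]
    _ ≤ 2 * π * r * (ε / (2 * π) / r) :=
        circleIntegral.norm_integral_le_of_norm_le_const hr.le hbound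
    _ = 0 + ε := by field_simp; ring

namespace Biorthogonality

variable {y a : ℕ → ℂ} {c : ℂ} {R : ℝ}

-- The paper's `φ_k` and `ψ_l`, with `a j` standing for `s_j⁻² y_j`.
def phi (y a : ℕ → ℂ) (k : ℕ) (z : ℂ) : ℂ :=
  (y (k + 1) - z)⁻¹ * ∏ j ∈ Icc 1 k, (z - a j) / (z - y j)

def psi (y a : ℕ → ℂ) (l : ℕ) (z : ℂ) : ℂ :=
  (y (l + 1) - a (l + 1)) / (a (l + 1) - z) * ∏ j ∈ Icc 1 l, (z - y j) / (z - a j)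

theorem prod_ne_zero_of_mem_sphere (hy : ∀ j, 1 ≤ j → y j ∈ ball c R)
    (ha : ∀ j, 1 ≤ j → a j ∉ closedBall c R) {z : ℂ} (hz : z ∈ sphere c R) (m : ℕ) :
    ∏ j ∈ Icc 1 m, (z - a j) / (z - y j) ≠ 0 :=
  prod_ne_zero_iff.2 fun j hj => div_ne_zero
    (sub_ne_zero.2 (ne_of_mem_of_not_mem (sphere_subset_closedBall hz) (ha j (mem_Icc.1 hj).1)))
    (sub_ne_zero.2 (sphere_disjoint_ball.ne_of_mem hz (hy j (mem_Icc.1 hj).1)))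

theorem circleIntegral_phi_mul_psi_of_lt (hy : ∀ j, 1 ≤ j → y j ∈ ball c R)
    (ha : ∀ j, 1 ≤ j → a j ∉ closedBall c R) {k l : ℕ} (hkl : k < l) :
    ∮ z in C(c, R), phi y a k z * psi y a l z = 0 := by
  set F : ℂ → ℂ := fun z => (a (k + 1) - z)⁻¹ * ((y (l + 1) - a (l + 1)) / (a (l + 1) - z)) *
    ∏ j ∈ Ioc (k + 1) l, (z - y j) / (z - a j)
  have hR : 0 < R := pos_of_mem_ball (hy 1 le_rfl)
  have hF : DifferentiableOn ℂ F (closedBall c R) := by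
    refine ((DifferentiableOn.inv (by fun_prop) fun z hz => ?_).mul
      (DifferentiableOn.div (by fun_prop) (by fun_prop) fun z hz => ?_)).mul
      (differentiableOn_prod_sub_div_sub _ fun j hj => ha j (by grind))
    · exact sub_ne_zero.2 (ne_of_mem_of_not_mem hz (ha _ le_add_self)).symm
    · exact sub_ne_zero.2 (ne_of_mem_of_not_mem hz (ha _ le_add_self)).symm
  calc ∮ z in C(c, R), phi y a k z * psi y a l z = ∮ z in C(c, R), F z := by
        refine circleIntegral.integral_congr hR.le fun z hz => ?_
        have hzy : z ≠ y (k + 1) := sphere_disjoint_ball.ne_of_mem hz (hy _ le_add_self)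
        have hza : z ≠ a (k + 1) :=
          ne_of_mem_of_not_mem (sphere_subset_closedBall hz) (ha _ le_add_self)
        have hza' : z ≠ a (l + 1) :=
          ne_of_mem_of_not_mem (sphere_subset_closedBall hz) (ha _ le_add_self)
        have hP := prod_ne_zero_of_mem_sphere hy ha hz k
        simp only [F]
        rw [phi, psi, prod_Icc_one_eq_mul_prod_Ioc _ hkl,
          prod_div_eq_inv_prod_div (Icc 1 k) (z - a ·)]
        generalize ∏ j ∈ Icc 1 k, (z - a j) / (z - y j) = P at hP ⊢
        field_simp
        ring
    _ = 0 := (hF.mono closure_ball_subset_closedBall).diffContOnCl.circleIntegral_eq_zero hR.le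

theorem circleIntegral_phi_mul_psi_self (hy : ∀ j, 1 ≤ j → y j ∈ ball c R)
    (ha : ∀ j, 1 ≤ j → a j ∉ closedBall c R) (k : ℕ) :
    ∮ z in C(c, R), phi y a k z * psi y a k z = 2 * π * I := by
  set g : ℂ → ℂ := fun z => (y (k + 1) - a (k + 1)) / (z - a (k + 1))
  have hyk : y (k + 1) ∈ ball c R := hy _ le_add_self
  have hak : a (k + 1) ∉ closedBall c R := ha _ le_add_self
  have hg : DifferentiableOn ℂ g (closedBall c R) :=
    DifferentiableOn.div (by fun_prop) (by fun_prop) fun z hz =>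
      sub_ne_zero.2 (ne_of_mem_of_not_mem hz hak)
  calc ∮ z in C(c, R), phi y a k z * psi y a k z = ∮ z in C(c, R), (z - y (k + 1))⁻¹ • g z := by
        refine circleIntegral.integral_congr (pos_of_mem_ball hyk).le fun z hz => ?_
        have hzy : z ≠ y (k + 1) := sphere_disjoint_ball.ne_of_mem hz hyk
        have hza : z ≠ a (k + 1) := ne_of_mem_of_not_mem (sphere_subset_closedBall hz) hak
        have hP := prod_ne_zero_of_mem_sphere hy ha hz k
        simp only [g, smul_eq_mul]
        rw [phi, psi, prod_div_eq_inv_prod_div (Icc 1 k) (z - a ·)]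
        generalize ∏ j ∈ Icc 1 k, (z - a j) / (z - y j) = P at hP ⊢
        field_simp
        ring
    _ = 2 * π * I * g (y (k + 1)) := hg.circleIntegral_sub_inv_smul hyk
    _ = 2 * π * I := by
        rw [show g (y (k + 1)) = 1 from
          div_self (sub_ne_zero.2 (ne_of_mem_of_not_mem (ball_subset_closedBall hyk) hak)), mul_one]

theorem circleIntegral_phi_mul_psi_of_gt (hy : ∀ j, 1 ≤ j → y j ∈ ball c R)
    (ha : ∀ j, 1 ≤ j → a j ∉ closedBall c R) {k l : ℕ} (hlk : l < k) :
    ∮ z in C(c, R), phi y a k z * psi y a l z = 0 := by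
  set G : ℂ → ℂ := fun z => (y (l + 1) - a (l + 1)) * (z - y (k + 1))⁻¹ * (z - y (l + 1))⁻¹ *
    ∏ j ∈ Ioc (l + 1) k, (z - a j) / (z - y j)
  have hR : 0 < R := pos_of_mem_ball (hy 1 le_rfl)
  have hG : DifferentiableOn ℂ G (ball c R)ᶜ := by
    refine (((differentiableOn_const _).mul
      (DifferentiableOn.inv (by fun_prop) fun z hz => ?_)).mul
      (DifferentiableOn.inv (by fun_prop) fun z hz => ?_)).mul
      (differentiableOn_prod_sub_div_sub _ fun j hj => not_not_intro (hy j (by grind)))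
    · exact sub_ne_zero.2 (ne_of_mem_of_not_mem (hy _ le_add_self) hz).symm
    · exact sub_ne_zero.2 (ne_of_mem_of_not_mem (hy _ le_add_self) hz).symm
  have hdecay : Tendsto (fun z => (z - c) • G z) (cobounded ℂ) (𝓝 0) := by
    have hlim := (((tendsto_sub_div_sub_cobounded c (y (k + 1))).const_mul
      (y (l + 1) - a (l + 1))).mul
      (tendsto_inv₀_cobounded.comp (tendsto_sub_const_cobounded (y (l + 1))))).mul
      (tendsto_prod_sub_div_sub_cobounded (Ioc (l + 1) k) a y)
    simp only [mul_zero, zero_mul] at hlim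
    refine hlim.congr fun z => ?_
    simp only [G, smul_eq_mul, Function.comp_apply]
    ring
  calc ∮ z in C(c, R), phi y a k z * psi y a l z = ∮ z in C(c, R), G z := by
        refine circleIntegral.integral_congr hR.le fun z hz => ?_
        have hzy : z ≠ y (k + 1) := sphere_disjoint_ball.ne_of_mem hz (hy _ le_add_self)
        have hzy' : z ≠ y (l + 1) := sphere_disjoint_ball.ne_of_mem hz (hy _ le_add_self)
        have hza : z ≠ a (l + 1) :=
          ne_of_mem_of_not_mem (sphere_subset_closedBall hz) (ha _ le_add_self)
        have hP := prod_ne_zero_of_mem_sphere hy ha hz l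
        simp only [G]
        rw [phi, psi, prod_Icc_one_eq_mul_prod_Ioc _ hlk,
          prod_div_eq_inv_prod_div (Icc 1 l) (z - a ·)]
        generalize ∏ j ∈ Icc 1 l, (z - a j) / (z - y j) = P at hP ⊢
        field_simp
        ring
    _ = 0 := circleIntegral_eq_zero_of_differentiableOn_compl_ball hR hG hdecay

theorem circleIntegral_phi_mul_psi (hy : ∀ j, 1 ≤ j → y j ∈ ball c R)
    (ha : ∀ j, 1 ≤ j → a j ∉ closedBall c R) (k l : ℕ) :
    ∮ z in C(c, R), phi y a k z * psi y a l z = if k = l then 2 * π * I else 0 := by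
  rcases lt_trichotomy k l with hkl | rfl | hlk
  · rw [if_neg hkl.ne, circleIntegral_phi_mul_psi_of_lt hy ha hkl]
  · rw [if_pos rfl, circleIntegral_phi_mul_psi_self hy ha]
  · rw [if_neg hlk.ne', circleIntegral_phi_mul_psi_of_gt hy ha hlk]

end Biorthogonality

theorem biorthogonality_general (y s : ℕ → ℂ) (c : ℂ) (R : ℝ)
    (hs : ∀ j, 1 ≤ j → s j ≠ 0)
    (h_in : ∀ j, 1 ≤ j → ‖y j - c‖ < R)
    (h_out : ∀ j, 1 ≤ j → R < ‖(s j ^ 2)⁻¹ * y j - c‖)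
    (k l : ℕ) :
    (2 * (π : ℂ) * Complex.I)⁻¹ *
        (∮ z in C(c, R),
          ((y (k + 1) - z)⁻¹ *
              ∏ j ∈ Icc 1 k, (z - (s j ^ 2)⁻¹ * y j) / (z - y j)) *
            (y (l + 1) * (s (l + 1) ^ 2 - 1) / (y (l + 1) - s (l + 1) ^ 2 * z) *
              ∏ j ∈ Icc 1 l, (s j ^ 2 * (y j - z)) / (y j - s j ^ 2 * z))) =
      if k = l then 1 else 0 := by
  have hs2 : ∀ j, 1 ≤ j → s j ^ 2 ≠ 0 := fun j hj => pow_ne_zero 2 (hs j hj)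
  have hψ : ∀ m z, ∏ j ∈ Icc 1 m, s j ^ 2 * (y j - z) / (y j - s j ^ 2 * z) =
      ∏ j ∈ Icc 1 m, (z - y j) / (z - (s j ^ 2)⁻¹ * y j) := fun m z =>
    prod_congr rfl fun j hj =>
      mul_sub_div_sub_mul_eq_sub_div_sub_inv_mul (hs2 j (mem_Icc.1 hj).1) ..
  simp only [hψ, mul_sub_one_div_sub_mul_eq_sub_div_inv_mul_sub (hs2 (l + 1) le_add_self)]
  have key := Biorthogonality.circleIntegral_phi_mul_psi (a := fun j => (s j ^ 2)⁻¹ * y j)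
    (fun j hj => mem_ball_iff_norm.2 (h_in j hj))
    (fun j hj => by rw [mem_closedBall_iff_norm, not_le]; exact h_out j hj) k l
  simp only [Biorthogonality.phi, Biorthogonality.psi] at key
  rw [key]
  split_ifs
  · exact inv_mul_cancel₀ two_pi_I_ne_zero
  · exact mul_zero _

/-- Biorthogonality of the functions
`φ_k(z) = (1/(y_{k+1} - z)) ∏_{j=1}^k (z - s_j⁻² y_j)/(z - y_j)` and
`ψ_l(z) = (y_{l+1}(s_{l+1}² - 1)/(y_{l+1} - s_{l+1}² z)) ∏_{j=1}^l s_j²(y_j - z)/(y_j - s_j² z)`: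
`(1/(2πi)) ∮_γ φ_k ψ_l dz = 1_{k=l}`, where the positively oriented contour `γ` is a
circle of radius `R` around `c` enclosing all the points `y_j` and excluding all the
points `s_j⁻² y_j`.  The sequences `y, s` are indexed starting from `1`. -/
theorem biorthogonality (y s : ℕ → ℂ) (c : ℂ) (R : ℝ) (hR : 0 < R)
    (hs : ∀ j, 1 ≤ j → s j ≠ 0)
    (h_in : ∀ j, 1 ≤ j → ‖y j - c‖ < R)
    (h_out : ∀ j, 1 ≤ j → R < ‖(s j ^ 2)⁻¹ * y j - c‖)
    (k l : ℕ) :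
    (2 * (π : ℂ) * Complex.I)⁻¹ *
        (∮ z in C(c, R),
          ((y (k + 1) - z)⁻¹ *
              ∏ j ∈ Icc 1 k, (z - (s j ^ 2)⁻¹ * y j) / (z - y j)) *
            (y (l + 1) * (s (l + 1) ^ 2 - 1) / (y (l + 1) - s (l + 1) ^ 2 * z) *
              ∏ j ∈ Icc 1 l, (s j ^ 2 * (y j - z)) / (y j - s j ^ 2 * z))) =
      if k = l then 1 else 0 :=
  biorthogonality_general y s c R hs h_in h_out k l

end
end

section
/- For complex u, v and sequences y_j, s_j satisfying |((u - s_j^{-2} y_j)/(u - y_j)) · ((v - y_j)/(v - s_j^{-2} y_j))| < 1 - δ < 1 for all sufficiently large j (with δ > 0 fixed), the infinite series ∑_{k=0}^∞ φ_k(u) ψ_k(v) converges and equals 1/(u - v), where φ_k(u) = (1/(y_{k+1} - u)) ∏_{j=1}^k (u - s_j^{-2} y_j)/(u - y_j) and ψ_k(v) = (y_{k+1}(s_{k+1}^2 - 1)/(y_{k+1} - s_{k+1}^2 v)) ∏_{j=1}^k (s_j^2 (y_j - v))/(y_j - s_j^2 v). -/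
open Finset Filter

noncomputable section

/-! Writing `r_j` for the `j`-th factor of the decay hypothesis and `P_k = r_1 ⋯ r_k`, one has
`φ_k(u) ψ_k(v) = (P_k - P_{k+1}) / (u - v)`, so the partial sums telescope to `(1 - P_n) / (u - v)`.
Since `‖r_j‖ ≤ 1 - δ` eventually, `P_n → 0` geometrically. -/

section Algebra

variable {K : Type*} [Field K]

/-- `φ_k(u)` of the paper. -/
def phi (y s : ℕ → K) (u : K) (k : ℕ) : K :=
  (y (k + 1) - u)⁻¹ * ∏ j ∈ Icc 1 k, (u - (s j ^ 2)⁻¹ * y j) / (u - y j)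

/-- `ψ_k(v)` of the paper. -/
def psi (y s : ℕ → K) (v : K) (k : ℕ) : K :=
  y (k + 1) * (s (k + 1) ^ 2 - 1) / (y (k + 1) - s (k + 1) ^ 2 * v) *
    ∏ j ∈ Icc 1 k, (s j ^ 2 * (y j - v)) / (y j - s j ^ 2 * v)

def telescopingRatio (a y u v : K) : K :=
  (u - a⁻¹ * y) / (u - y) * ((v - y) / (v - a⁻¹ * y))

def ratioProd (y s : ℕ → K) (u v : K) (k : ℕ) : K :=
  ∏ j ∈ Icc 1 k, telescopingRatio (s j ^ 2) (y j) u v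

lemma mul_sub_div_sub_mul_eq {a : K} (ha : a ≠ 0) (y v : K) :
    a * (y - v) / (y - a * v) = (v - y) / (v - a⁻¹ * y) := by
  rw [← mul_div_mul_left (v - y) _ ha, mul_sub a v (a⁻¹ * y), mul_inv_cancel_left₀ ha,
    ← neg_div_neg_eq]
  ring

lemma inv_sub_mul_div_eq_one_sub_telescopingRatio {a y u v : K} (ha : a ≠ 0) (huy : u ≠ y)
    (hvy : v ≠ a⁻¹ * y) (huv : u ≠ v) :
    (y - u)⁻¹ * (y * (a - 1) / (y - a * v)) = (u - v)⁻¹ * (1 - telescopingRatio a y u v) := by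
  have hden : v - a⁻¹ * y = a⁻¹ * (a * v - y) := by field_simp
  have havy : a * v - y ≠ 0 := right_ne_zero_of_mul (hden ▸ sub_ne_zero.mpr hvy)
  have hyav : y - a * v ≠ 0 := by rwa [← neg_sub, neg_ne_zero]
  rw [telescopingRatio, hden]
  field_simp
  ring

lemma ratioProd_succ (y s : ℕ → K) (u v : K) (k : ℕ) :
    ratioProd y s u v (k + 1) =
      ratioProd y s u v k * telescopingRatio (s (k + 1) ^ 2) (y (k + 1)) u v :=
  prod_Icc_succ_top (Nat.le_add_left 1 k) _

variable {y s : ℕ → K} {u v : K}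

lemma phi_mul_psi (hs : ∀ j, 1 ≤ j → s j ≠ 0) (huy : ∀ j, 1 ≤ j → u ≠ y j)
    (hvy : ∀ j, 1 ≤ j → v ≠ (s j ^ 2)⁻¹ * y j) (huv : u ≠ v) (k : ℕ) :
    phi y s u k * psi y s v k = (u - v)⁻¹ * (ratioProd y s u v k - ratioProd y s u v (k + 1)) := by
  have hk : 1 ≤ k + 1 := Nat.le_add_left 1 k
  have hstep := inv_sub_mul_div_eq_one_sub_telescopingRatio (pow_ne_zero 2 (hs (k + 1) hk))
    (huy (k + 1) hk) (hvy (k + 1) hk) huv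
  have hpsi : ∏ j ∈ Icc 1 k, s j ^ 2 * (y j - v) / (y j - s j ^ 2 * v) =
      ∏ j ∈ Icc 1 k, (v - y j) / (v - (s j ^ 2)⁻¹ * y j) :=
    prod_congr rfl fun j hj => mul_sub_div_sub_mul_eq (pow_ne_zero 2 (hs j (mem_Icc.mp hj).1)) _ _
  have hprod : ratioProd y s u v k = (∏ j ∈ Icc 1 k, (u - (s j ^ 2)⁻¹ * y j) / (u - y j)) *
      ∏ j ∈ Icc 1 k, (v - y j) / (v - (s j ^ 2)⁻¹ * y j) :=
    prod_mul_distrib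
  rw [ratioProd_succ, hprod]
  calc phi y s u k * psi y s v k
      = (y (k + 1) - u)⁻¹ * (y (k + 1) * (s (k + 1) ^ 2 - 1) / (y (k + 1) - s (k + 1) ^ 2 * v)) *
          ((∏ j ∈ Icc 1 k, (u - (s j ^ 2)⁻¹ * y j) / (u - y j)) *
            ∏ j ∈ Icc 1 k, (v - y j) / (v - (s j ^ 2)⁻¹ * y j)) := by
        rw [phi, psi, hpsi]; ring
    _ = _ := by rw [hstep]; ring

lemma sum_phi_mul_psi (hs : ∀ j, 1 ≤ j → s j ≠ 0) (huy : ∀ j, 1 ≤ j → u ≠ y j)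
    (hvy : ∀ j, 1 ≤ j → v ≠ (s j ^ 2)⁻¹ * y j) (huv : u ≠ v) (n : ℕ) :
    ∑ k ∈ range n, phi y s u k * psi y s v k = (u - v)⁻¹ * (1 - ratioProd y s u v n) := by
  simp only [phi_mul_psi hs huy hvy huv, ← mul_sum, sum_range_sub']
  simp [ratioProd]

end Algebra

theorem tendsto_prod_Icc_atTop_zero {R : Type*} [NormedCommRing R] [CompleteSpace R]
    {f : ℕ → R} {c : ℝ} (hc : c < 1) (hf : ∀ᶠ j in atTop, ‖f j‖ ≤ c) :
    Tendsto (fun n => ∏ j ∈ Icc 1 n, f j) atTop (nhds 0) := by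
  refine (summable_of_ratio_norm_eventually_le hc ?_).tendsto_atTop_zero
  filter_upwards [tendsto_add_atTop_nat 1 hf] with n hn
  rw [prod_Icc_succ_top (Nat.le_add_left 1 n), mul_comm]
  exact (norm_mul_le _ _).trans (mul_le_mul_of_nonneg_right hn (norm_nonneg _))

/-- The telescoping series identity `∑_{k=0}^∞ φ_k(u) ψ_k(v) = 1/(u - v)`, where
`φ_k(u) = (1/(y_{k+1} - u)) ∏_{j=1}^k (u - s_j⁻² y_j)/(u - y_j)` and
`ψ_k(v) = (y_{k+1}(s_{k+1}² - 1)/(y_{k+1} - s_{k+1}² v)) ∏_{j=1}^k s_j²(y_j - v)/(y_j - s_j² v)`,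
under the geometric decay hypothesis
`|((u - s_j⁻² y_j)/(u - y_j)) ((v - y_j)/(v - s_j⁻² y_j))| < 1 - δ < 1`
for all sufficiently large `j`.  The sequences `y, s` are indexed starting from `1`;
convergence is convergence of the partial sums. -/
theorem telescoping_series (y s : ℕ → ℂ) (u v : ℂ) (δ : ℝ) (hδ : 0 < δ)
    (hs : ∀ j, 1 ≤ j → s j ≠ 0)
    (huy : ∀ j, 1 ≤ j → u ≠ y j)
    (hvy : ∀ j, 1 ≤ j → v ≠ (s j ^ 2)⁻¹ * y j)
    (huv : u ≠ v)
    (hbound : ∃ J : ℕ, ∀ j, J ≤ j → 1 ≤ j →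
      ‖(u - (s j ^ 2)⁻¹ * y j) / (u - y j) * ((v - y j) / (v - (s j ^ 2)⁻¹ * y j))‖ < 1 - δ) :
    Tendsto
      (fun n => ∑ k ∈ range n,
        ((y (k + 1) - u)⁻¹ * ∏ j ∈ Icc 1 k, (u - (s j ^ 2)⁻¹ * y j) / (u - y j)) *
          (y (k + 1) * (s (k + 1) ^ 2 - 1) / (y (k + 1) - s (k + 1) ^ 2 * v) *
            ∏ j ∈ Icc 1 k, (s j ^ 2 * (y j - v)) / (y j - s j ^ 2 * v)))
      atTop (nhds (1 / (u - v))) := by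
  obtain ⟨J, hJ⟩ := hbound
  have hdecay : ∀ᶠ j in atTop, ‖telescopingRatio (s j ^ 2) (y j) u v‖ ≤ 1 - δ :=
    eventually_atTop.mpr ⟨max J 1, fun j hj =>
      (hJ j (le_of_max_le_left hj) (le_of_max_le_right hj)).le⟩
  have hprod : Tendsto (ratioProd y s u v) atTop (nhds 0) :=
    tendsto_prod_Icc_atTop_zero (by linarith) hdecay
  change Tendsto (fun n => ∑ k ∈ range n, phi y s u k * psi y s v k) atTop _
  simp_rw [sum_phi_mul_psi hs huy hvy huv]
  simpa [one_div] using ((tendsto_const_nhds (x := (1 : ℂ))).sub hprod).const_mul (u - v)⁻¹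

end
end

section
/- The cross vertex weights R(0,0;0,0) = 1, R(1,1;1,1) = (x_2 - x_1 r_1^{-2})/(x_1 - x_2 r_2^{-2}), R(1,0;1,0) = (x_1 r_1^{-2} - x_2 r_2^{-2})/(x_1 - x_2 r_2^{-2}), R(0,1;0,1) = (x_1 - x_2)/(x_1 - x_2 r_2^{-2}), R(1,0;0,1) = x_1(1 - r_1^{-2})/(x_1 - x_2 r_2^{-2}), R(0,1;1,0) = x_2(1 - r_2^{-2})/(x_1 - x_2 r_2^{-2}) (with R(i_1,j_1;i_2,j_2) = 0 unless i_1 + j_1 = i_2 + j_2), together with the free fermion weights W(·|x_i; y; r_i; s), satisfy the Yang–Baxter equation: for all i_1,i_2,i_3,j_1,j_2,j_3 ∈ {0,1}, ∑_{k_1,k_2,k_3 ∈ {0,1}} R(i_2,i_1;k_2,k_1) W(i_3,k_1;k_3,j_1 | x_1;y;r_1;s) W(k_3,k_2;j_3,j_2 | x_2;y;r_2;s) = ∑_{k'_1,k'_2,k'_3 ∈ {0,1}} R(k'_2,k'_1;j_2,j_1) W(i_3,i_2;k'_3,k'_2 | x_2;y;r_2;s) W(k'_3,i_1;j_3,k'_1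 | x_1;y;r_1;s). -/
/-!
The parameters `r₁, r₂, s` enter the weights only through `a₁ = r₁⁻², a₂ = r₂⁻², c = s⁻²`.
Treating these as independent variables, every weight is a rational function of
`x₁, x₂, y, a₁, a₂, c` with denominator `x₁ - a₂ x₂`, `c y - x₁` or `c y - x₂`, so each of the
`2⁶` boundary conditions gives an identity of rational functions over an arbitrary field, checked
by clearing these denominators.
-/

noncomputable section

/-- The free fermion six vertex weights `W(i₁,j₁;i₂,j₂ | x;y;r;s)`.
Weights are zero unless `i₁ + j₁ = i₂ + j₂` (path conservation). -/
def W6 (x y r s : ℂ) : Bool → Bool → Bool → Bool → ℂ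
  | false, false, false, false => 1
  | true, true, true, true => ((r ^ 2)⁻¹ * x - y) / ((s ^ 2)⁻¹ * y - x)
  | true, false, true, false => ((s ^ 2)⁻¹ * y - (r ^ 2)⁻¹ * x) / ((s ^ 2)⁻¹ * y - x)
  | false, true, false, true => (y - x) / ((s ^ 2)⁻¹ * y - x)
  | true, false, false, true => x * ((r ^ 2)⁻¹ - 1) / ((s ^ 2)⁻¹ * y - x)
  | false, true, true, false => y * ((s ^ 2)⁻¹ - 1) / ((s ^ 2)⁻¹ * y - x)
  | _, _, _, _ => 0

/-- The cross vertex weights `R(i₁,j₁;i₂,j₂)`, zero unless `i₁ + j₁ = i₂ + j₂`. -/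
def R6 (x1 x2 r1 r2 : ℂ) : Bool → Bool → Bool → Bool → ℂ
  | false, false, false, false => 1
  | true, true, true, true => (x2 - x1 * (r1 ^ 2)⁻¹) / (x1 - x2 * (r2 ^ 2)⁻¹)
  | true, false, true, false => (x1 * (r1 ^ 2)⁻¹ - x2 * (r2 ^ 2)⁻¹) / (x1 - x2 * (r2 ^ 2)⁻¹)
  | false, true, false, true => (x1 - x2) / (x1 - x2 * (r2 ^ 2)⁻¹)
  | true, false, false, true => x1 * (1 - (r1 ^ 2)⁻¹) / (x1 - x2 * (r2 ^ 2)⁻¹)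
  | false, true, true, false => x2 * (1 - (r2 ^ 2)⁻¹) / (x1 - x2 * (r2 ^ 2)⁻¹)
  | _, _, _, _ => 0

section FreeFermion

variable {K : Type*} [Field K]

def freeFermionWeight (x y a c : K) : Bool → Bool → Bool → Bool → K
  | false, false, false, false => 1
  | true, true, true, true => (a * x - y) / (c * y - x)
  | true, false, true, false => (c * y - a * x) / (c * y - x)
  | false, true, false, true => (y - x) / (c * y - x)
  | true, false, false, true => x * (a - 1) / (c * y - x)
  | false, true, true, false => y * (c - 1) / (c * y - x)
  | _, _, _, _ => 0

def crossWeight (x1 x2 a1 a2 : K) : Bool → Bool → Bool → Bool → K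
  | false, false, false, false => 1
  | true, true, true, true => (x2 - x1 * a1) / (x1 - x2 * a2)
  | true, false, true, false => (x1 * a1 - x2 * a2) / (x1 - x2 * a2)
  | false, true, false, true => (x1 - x2) / (x1 - x2 * a2)
  | true, false, false, true => x1 * (1 - a1) / (x1 - x2 * a2)
  | false, true, true, false => x2 * (1 - a2) / (x1 - x2 * a2)
  | _, _, _, _ => 0

set_option maxHeartbeats 1000000 in
theorem crossWeight_freeFermionWeight_yangBaxter (x1 x2 y a1 a2 c : K)
    (hR : x1 - x2 * a2 ≠ 0) (hW1 : c * y - x1 ≠ 0) (hW2 : c * y - x2 ≠ 0)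
    (i1 i2 i3 j1 j2 j3 : Bool) :
    (∑ k1 : Bool, ∑ k2 : Bool, ∑ k3 : Bool, crossWeight x1 x2 a1 a2 i2 i1 k2 k1 *
        freeFermionWeight x1 y a1 c i3 k1 k3 j1 * freeFermionWeight x2 y a2 c k3 k2 j3 j2) =
      ∑ k1 : Bool, ∑ k2 : Bool, ∑ k3 : Bool, crossWeight x1 x2 a1 a2 k2 k1 j2 j1 *
        freeFermionWeight x2 y a2 c i3 i2 k3 k2 * freeFermionWeight x1 y a1 c k3 i1 j3 k1 := by
  -- `field_simp` normalizes these denominators to `y * c - x`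
  have hW1' : y * c - x1 ≠ 0 := by rwa [mul_comm]
  have hW2' : y * c - x2 ≠ 0 := by rwa [mul_comm]
  cases i1 <;> cases i2 <;> cases i3 <;> cases j1 <;> cases j2 <;> cases j3 <;>
    simp only [crossWeight, freeFermionWeight, Fintype.sum_bool] <;>
    field_simp <;> ring

theorem W6_eq_freeFermionWeight (x y r s : ℂ) :
    W6 x y r s = freeFermionWeight x y (r ^ 2)⁻¹ (s ^ 2)⁻¹ := rfl

theorem R6_eq_crossWeight (x1 x2 r1 r2 : ℂ) :
    R6 x1 x2 r1 r2 = crossWeight x1 x2 (r1 ^ 2)⁻¹ (r2 ^ 2)⁻¹ := rfl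

end FreeFermion

theorem yang_baxter_general (x1 x2 y r1 r2 s : ℂ)
    (hden : x1 - x2 * (r2 ^ 2)⁻¹ ≠ 0)
    (hd1 : (s ^ 2)⁻¹ * y - x1 ≠ 0) (hd2 : (s ^ 2)⁻¹ * y - x2 ≠ 0)
    (i1 i2 i3 j1 j2 j3 : Bool) :
    (∑ k1 : Bool, ∑ k2 : Bool, ∑ k3 : Bool,
        R6 x1 x2 r1 r2 i2 i1 k2 k1 * W6 x1 y r1 s i3 k1 k3 j1 * W6 x2 y r2 s k3 k2 j3 j2) =
      ∑ k1 : Bool, ∑ k2 : Bool, ∑ k3 : Bool,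
        R6 x1 x2 r1 r2 k2 k1 j2 j1 * W6 x2 y r2 s i3 i2 k3 k2 * W6 x1 y r1 s k3 i1 j3 k1 := by
  rw [R6_eq_crossWeight, W6_eq_freeFermionWeight, W6_eq_freeFermionWeight]
  exact crossWeight_freeFermionWeight_yangBaxter x1 x2 y _ _ _ hden hd1 hd2 i1 i2 i3 j1 j2 j3

/-- The Yang–Baxter equation for the cross vertex weights `R` and the free fermion
six vertex weights `W`. -/
theorem yang_baxter (x1 x2 y r1 r2 s : ℂ)
    (hr1 : r1 ≠ 0) (hr2 : r2 ≠ 0) (hs : s ≠ 0)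
    (hden : x1 - x2 * (r2 ^ 2)⁻¹ ≠ 0)
    (hd1 : (s ^ 2)⁻¹ * y - x1 ≠ 0) (hd2 : (s ^ 2)⁻¹ * y - x2 ≠ 0)
    (i1 i2 i3 j1 j2 j3 : Bool) :
    (∑ k1 : Bool, ∑ k2 : Bool, ∑ k3 : Bool,
        R6 x1 x2 r1 r2 i2 i1 k2 k1 * W6 x1 y r1 s i3 k1 k3 j1 * W6 x2 y r2 s k3 k2 j3 j2) =
      ∑ k1 : Bool, ∑ k2 : Bool, ∑ k3 : Bool,
        R6 x1 x2 r1 r2 k2 k1 j2 j1 * W6 x2 y r2 s i3 i2 k3 k2 * W6 x1 y r1 s k3 i1 j3 k1 :=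
  yang_baxter_general x1 x2 y r1 r2 s hden hd1 hd2 i1 i2 i3 j1 j2 j3

end
end

section
/- Let A, B, C, D be the 2×2 matrices acting on C^2 with basis e_0, e_1 defined by A e_i = W(i,1;i,1) e_i, B e_i = W(i,0;i-1,1) e_{i-1}, C e_i = W(i,1;i+1,0) e_{i+1}, D e_i = W(i,0;i,0) e_i (with e_{-1} = e_2 = 0), where W = W(·|x; y_k; r; s_k). Then as operators on the tensor product V^{(k_1)} ⊗ ... ⊗ V^{(k_n)} (extended via A(v_1⊗v_2) = Cv_1⊗Bv_2 + Av_1⊗Av_2, B(v_1⊗v_2) = Dv_1⊗Bv_2 + Bv_1⊗Av_2, C(v_1⊗v_2) = Cv_1⊗Dv_2 + Av_1⊗Cv_2, D(v_1⊗v_2) = Dv_1⊗Dv_2 + Bv_1⊗Cv_2), the commutation relation B(x_2,r_2) D(x_1,r_1) = ((r_1^{-2}x_1 - x_2)/(x_1 - x_2)) D(x_1,r_1) B(x_2,r_2) + ((1 - r_2^{-2})x_2/(x_1 - x_2)) D(x_2,r_2) B(x_1,r_1) holds. -/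
noncomputable section

/-- The row operator on the `n`-fold tensor product `V^{(1)} ⊗ ⋯ ⊗ V^{(n)}`
(identified with `(Fin n → Bool) → ℂ`, a basis vector being an occupancy
configuration of the `n` vertical edges), with left horizontal boundary state `a`
and right horizontal boundary state `b`.  Summation over the internal horizontal
edges `h` reproduces the recursive coproduct rules
`A(v₁⊗v₂)=Cv₁⊗Bv₂+Av₁⊗Av₂`, `B(v₁⊗v₂)=Dv₁⊗Bv₂+Bv₁⊗Av₂`,
`C(v₁⊗v₂)=Cv₁⊗Dv₂+Av₁⊗Cv₂`, `D(v₁⊗v₂)=Dv₁⊗Dv₂+Bv₁⊗Cv₂`, where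
`A = rowOp n y s x r true true`, `B = rowOp n y s x r false true`,
`C = rowOp n y s x r true false`, `D = rowOp n y s x r false false`. -/
def rowOp (n : ℕ) (y s : Fin n → ℂ) (x r : ℂ) (a b : Bool) :
    Matrix (Fin n → Bool) (Fin n → Bool) ℂ :=
  Matrix.of fun mOut mIn =>
    ∑ h : Fin (n + 1) → Bool,
      if h 0 = a ∧ h (Fin.last n) = b then
        ∏ c : Fin n, W6 x (y c) r (s c) (mIn c) (h c.castSucc) (mOut c) (h c.succ)
      else 0

/-!
The two-row monodromy matrices `T(x₁) ⊗ T(x₂)` and `T(x₂) ⊗ T(x₁)` are intertwined by a check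
`R`-matrix `Ř`: the train argument propagates the one-column relation `Ř (L₁ ⊗ L₂) = (L₂ ⊗ L₁) Ř`
through the row by induction on the number of columns. After clearing the column denominator
of the weights, the one-column relation is a polynomial identity checked vertex by vertex.
Taking `Ř` to be a multiple of the inverse of the usual free-fermion `R`-matrix, the
`((0,0),(0,1))` entry of the intertwining relation reads
`(r₁⁻²x₁ - x₂) D(x₁)B(x₂) = (x₁ - x₂) B(x₂)D(x₁) + (r₂⁻² - 1) x₂ D(x₂)B(x₁)`,
which is the claim.
-/

open Matrix
open scoped Kronecker

lemma Fin.sum_pi_succ {n : ℕ} {σ M : Type*} [Fintype σ] [AddCommMonoid M]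
    (f : (Fin (n + 1) → σ) → M) :
    ∑ h, f h = ∑ a, ∑ g : Fin n → σ, f (Fin.cons a g) := by
  rw [← (Fin.consEquiv fun _ => σ).sum_comp, Fintype.sum_prod_type]
  rfl

namespace VertexModel

variable {R σ τ : Type*} [CommSemiring R]

def vertexMatrix (w : τ → σ → τ → σ → R) (i o : τ) : Matrix σ σ R :=
  Matrix.of fun a b => w i a o b

lemma vertexMatrix_smul (c : R) (w : τ → σ → τ → σ → R) (i o : τ) :
    vertexMatrix (c • w) i o = c • vertexMatrix w i o :=
  rfl

section

variable [Fintype τ]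

def twoVertexMatrix (wA wB : τ → σ → τ → σ → R) (i o : τ) : Matrix (σ × σ) (σ × σ) R :=
  ∑ m, vertexMatrix wA m o ⊗ₖ vertexMatrix wB i m

lemma twoVertexMatrix_apply (wA wB : τ → σ → τ → σ → R) (i o : τ) (a₁ a₂ b₁ b₂ : σ) :
    twoVertexMatrix wA wB i o (a₁, a₂) (b₁, b₂) = ∑ m, wA m a₁ o b₁ * wB i a₂ m b₂ := by
  simp [twoVertexMatrix, vertexMatrix, Matrix.sum_apply]

lemma twoVertexMatrix_smul (c d : R) (wA wB : τ → σ → τ → σ → R) (i o : τ) :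
    twoVertexMatrix (c • wA) (d • wB) i o = (c * d) • twoVertexMatrix wA wB i o := by
  simp only [twoVertexMatrix, Finset.smul_sum, vertexMatrix_smul, smul_kronecker, kronecker_smul,
    smul_smul, mul_comm]

end

variable [Fintype σ] [DecidableEq σ] {n : ℕ}

/-- `w c i a o b` is the weight of column `c` with vertical edges `i` (in), `o` (out) and
horizontal edges `a` (left), `b` (right), as in `rowOp`. -/
def rowTransfer (w : Fin n → τ → σ → τ → σ → R) (a b : σ) :
    Matrix (Fin n → τ) (Fin n → τ) R :=
  Matrix.of fun mOut mIn =>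
    ∑ h : Fin (n + 1) → σ,
      if h 0 = a ∧ h (Fin.last n) = b then
        ∏ c : Fin n, w c (mIn c) (h c.castSucc) (mOut c) (h c.succ)
      else 0

def monodromy (w : Fin n → τ → σ → τ → σ → R) (mOut mIn : Fin n → τ) : Matrix σ σ R :=
  Matrix.of fun a b => rowTransfer w a b mOut mIn

lemma monodromy_zero (w : Fin 0 → τ → σ → τ → σ → R) (mOut mIn : Fin 0 → τ) :
    monodromy w mOut mIn = 1 := by
  ext a b
  simp only [monodromy, rowTransfer, of_apply]
  rw [Fin.sum_pi_succ]
  simp only [Fin.last_zero, Fin.cons_zero, Finset.univ_eq_empty, Finset.prod_empty,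
    Fintype.sum_unique, ite_and, Finset.sum_ite_eq', Finset.mem_univ, if_true, one_apply]

lemma monodromy_succ (w : Fin (n + 1) → τ → σ → τ → σ → R) (mOut mIn : Fin (n + 1) → τ) :
    monodromy w mOut mIn = vertexMatrix (w 0) (mIn 0) (mOut 0) *
      monodromy (Fin.tail w) (Fin.tail mOut) (Fin.tail mIn) := by
  ext a b
  simp only [vertexMatrix, monodromy, rowTransfer, mul_apply, of_apply, Finset.mul_sum]
  rw [Fin.sum_pi_succ, Finset.sum_comm (f := fun j i => _ * _)]
  simp only [Fin.prod_univ_succ, Fin.castSucc_zero, Fin.cons_zero, ← Fin.succ_last,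
    ← Fin.succ_castSucc, Fin.cons_succ,
    ite_and, mul_ite, mul_zero, Finset.sum_ite_eq, Finset.mem_univ, if_true, Fin.tail]
  rw [Finset.sum_comm]
  simp only [Finset.sum_ite_eq', Finset.mem_univ, if_true]

variable [Fintype τ]

def doubleMonodromy (wA wB : Fin n → τ → σ → τ → σ → R) (mOut mIn : Fin n → τ) :
    Matrix (σ × σ) (σ × σ) R :=
  ∑ m, monodromy wA mOut m ⊗ₖ monodromy wB m mIn

lemma doubleMonodromy_apply (wA wB : Fin n → τ → σ → τ → σ → R) (mOut mIn : Fin n → τ)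
    (a₁ a₂ b₁ b₂ : σ) :
    doubleMonodromy wA wB mOut mIn (a₁, a₂) (b₁, b₂) =
      (rowTransfer wA a₁ b₁ * rowTransfer wB a₂ b₂) mOut mIn := by
  simp [doubleMonodromy, monodromy, mul_apply, Matrix.sum_apply]

lemma doubleMonodromy_zero (wA wB : Fin 0 → τ → σ → τ → σ → R) (mOut mIn : Fin 0 → τ) :
    doubleMonodromy wA wB mOut mIn = 1 := by
  simp [doubleMonodromy, monodromy_zero]

lemma doubleMonodromy_succ (wA wB : Fin (n + 1) → τ → σ → τ → σ → R)
    (mOut mIn : Fin (n + 1) → τ) :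
    doubleMonodromy wA wB mOut mIn = twoVertexMatrix (wA 0) (wB 0) (mIn 0) (mOut 0) *
      doubleMonodromy (Fin.tail wA) (Fin.tail wB) (Fin.tail mOut) (Fin.tail mIn) := by
  simp only [doubleMonodromy, twoVertexMatrix, monodromy_succ, Finset.sum_mul, Finset.mul_sum,
    ← mul_kronecker_mul]
  rw [Fin.sum_pi_succ]
  simp only [Fin.cons_zero, Fin.tail_cons]
  exact Finset.sum_comm

theorem semiconjBy_doubleMonodromy {Ř : Matrix (σ × σ) (σ × σ) R}
    {wA wB : Fin n → τ → σ → τ → σ → R}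
    (h : ∀ c i o, SemiconjBy Ř (twoVertexMatrix (wA c) (wB c) i o)
      (twoVertexMatrix (wB c) (wA c) i o))
    (mOut mIn : Fin n → τ) :
    SemiconjBy Ř (doubleMonodromy wA wB mOut mIn) (doubleMonodromy wB wA mOut mIn) := by
  induction n with
  | zero => simpa only [doubleMonodromy_zero] using SemiconjBy.one_right Ř
  | succ n ih =>
    rw [doubleMonodromy_succ, doubleMonodromy_succ]
    exact (h 0 _ _).mul_right (ih (fun c => h c.succ) _ _)

end VertexModel

namespace FreeFermion

open VertexModel

variable {K : Type*} [CommRing K]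

def numer (x y u v : K) : Bool → Bool → Bool → Bool → K
  | false, false, false, false => v * y - x
  | true, true, true, true => u * x - y
  | true, false, true, false => v * y - u * x
  | false, true, false, true => y - x
  | true, false, false, true => x * (u - 1)
  | false, true, true, false => y * (v - 1)
  | _, _, _, _ => 0

def checkR (x₁ x₂ u₁ u₂ : K) : Matrix (Bool × Bool) (Bool × Bool) K :=
  Matrix.of fun
    | (false, false), (false, false) => u₁ * x₁ - x₂
    | (true, true), (true, true) => u₂ * x₂ - x₁
    | (true, false), (true, false) => x₁ * (u₁ - 1)
    | (false, true), (true, false) => u₁ * x₁ - u₂ * x₂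
    | (true, false), (false, true) => x₁ - x₂
    | (false, true), (false, true) => x₂ * (u₂ - 1)
    | _, _ => 0

theorem semiconjBy_checkR_numer (x₁ x₂ u₁ u₂ y v : K) (i o : Bool) :
    SemiconjBy (checkR x₁ x₂ u₁ u₂)
      (twoVertexMatrix (numer x₁ y u₁ v) (numer x₂ y u₂ v) i o)
      (twoVertexMatrix (numer x₂ y u₂ v) (numer x₁ y u₁ v) i o) := by
  unfold SemiconjBy
  ext ⟨a₁, a₂⟩ ⟨b₁, b₂⟩
  simp only [mul_apply, Fintype.sum_prod_type, twoVertexMatrix_apply, Fintype.sum_bool]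
  cases a₁ <;> cases a₂ <;> cases b₁ <;> cases b₂ <;> cases i <;> cases o <;>
    simp only [checkR, numer, of_apply] <;> ring

lemma W6_eq_smul_numer (x y r s : ℂ) (h : (s ^ 2)⁻¹ * y - x ≠ 0) :
    W6 x y r s = ((s ^ 2)⁻¹ * y - x)⁻¹ • numer x y (r ^ 2)⁻¹ (s ^ 2)⁻¹ := by
  funext i j k l
  cases i <;> cases j <;> cases k <;> cases l <;>
    simp [W6, numer, div_eq_inv_mul, h]

theorem semiconjBy_checkR_W6 (x₁ x₂ r₁ r₂ y s : ℂ) (h₁ : (s ^ 2)⁻¹ * y - x₁ ≠ 0)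
    (h₂ : (s ^ 2)⁻¹ * y - x₂ ≠ 0) (i o : Bool) :
    SemiconjBy (checkR x₁ x₂ (r₁ ^ 2)⁻¹ (r₂ ^ 2)⁻¹)
      (twoVertexMatrix (W6 x₁ y r₁ s) (W6 x₂ y r₂ s) i o)
      (twoVertexMatrix (W6 x₂ y r₂ s) (W6 x₁ y r₁ s) i o) := by
  rw [W6_eq_smul_numer _ _ _ _ h₁, W6_eq_smul_numer _ _ _ _ h₂, twoVertexMatrix_smul,
    twoVertexMatrix_smul, mul_comm]
  exact (semiconjBy_checkR_numer _ _ _ _ _ _ i o).smul_right _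

end FreeFermion

lemma rowOp_eq_rowTransfer (n : ℕ) (y s : Fin n → ℂ) (x r : ℂ) (a b : Bool) :
    rowOp n y s x r a b = VertexModel.rowTransfer (fun c => W6 x (y c) r (s c)) a b :=
  rfl

open VertexModel FreeFermion in
theorem BD_commutation_general (n : ℕ) (y s : Fin n → ℂ) (x1 x2 r1 r2 : ℂ)
    (hx : x1 ≠ x2)
    (hden1 : ∀ c, (s c ^ 2)⁻¹ * y c - x1 ≠ 0)
    (hden2 : ∀ c, (s c ^ 2)⁻¹ * y c - x2 ≠ 0) :
    rowOp n y s x2 r2 false true * rowOp n y s x1 r1 false false =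
      (((r1 ^ 2)⁻¹ * x1 - x2) / (x1 - x2)) •
          (rowOp n y s x1 r1 false false * rowOp n y s x2 r2 false true) +
        ((1 - (r2 ^ 2)⁻¹) * x2 / (x1 - x2)) •
          (rowOp n y s x2 r2 false false * rowOp n y s x1 r1 false true) := by
  ext mOut mIn
  have hRTT := semiconjBy_doubleMonodromy
    (fun c => semiconjBy_checkR_W6 x1 x2 r1 r2 (y c) (s c) (hden1 c) (hden2 c)) mOut mIn
  have hentry := congrFun (congrFun hRTT (false, false)) (false, true)
  simp only [mul_apply, Fintype.sum_prod_type, Fintype.sum_bool, checkR, of_apply,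
    doubleMonodromy_apply] at hentry
  simp only [rowOp_eq_rowTransfer, Matrix.add_apply, Matrix.smul_apply, smul_eq_mul, mul_apply]
  field_simp [sub_ne_zero.2 hx]
  linear_combination -hentry

/-- The commutation relation
`B(x₂,r₂) D(x₁,r₁) = ((r₁⁻²x₁ - x₂)/(x₁ - x₂)) D(x₁,r₁) B(x₂,r₂)
  + ((1 - r₂⁻²)x₂/(x₁ - x₂)) D(x₂,r₂) B(x₁,r₁)`
for the row operators built from the free fermion six vertex weights, acting on
an arbitrary `n`-fold tensor product. -/
theorem BD_commutation (n : ℕ) (y s : Fin n → ℂ) (x1 x2 r1 r2 : ℂ)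
    (hx : x1 ≠ x2) (hr1 : r1 ≠ 0) (hr2 : r2 ≠ 0)
    (hs : ∀ c, s c ≠ 0)
    (hden1 : ∀ c, (s c ^ 2)⁻¹ * y c - x1 ≠ 0)
    (hden2 : ∀ c, (s c ^ 2)⁻¹ * y c - x2 ≠ 0) :
    rowOp n y s x2 r2 false true * rowOp n y s x1 r1 false false =
      (((r1 ^ 2)⁻¹ * x1 - x2) / (x1 - x2)) •
          (rowOp n y s x1 r1 false false * rowOp n y s x2 r2 false true) +
        ((1 - (r2 ^ 2)⁻¹) * x2 / (x1 - x2)) •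
          (rowOp n y s x2 r2 false false * rowOp n y s x1 r1 false true) :=
  BD_commutation_general n y s x1 x2 r1 r2 hx hden1 hden2

end
end

section
/- (Factorial Schur as five vertex partition function) There is a weight-preserving bijection between semistandard Young tableaux of shape λ with entries in {1,...,N}, and path configurations of the five vertex model in the half-infinite strip Z≥1 × {1,...,N} with paths entering from the bottom at positions S(λ) = {λ_j + N - j + 1 : 1 ≤ j ≤ N} and exiting through the right boundary (left and top boundaries empty; the vertex (1,1;1,1) forbidden). With the weights w(0,0;0,0) = x_{N+1-j} + y_i at position (i,j), w(1,1;1,1) = 0, and all other four admissible vertex weights equal to 1, the resulting partition function equals the factorial Schur polynomial s_λ(x | y) = ∑_T ∏_{(i,j)∈λ} (x_{T(i,j)} + y_{T(i,j)+j-i}). -/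
open Finset

noncomputable section

/-- A semistandard Young tableau of shape `λ` (a partition with at most `N`
rows, given `1`-based as `lam : ℕ → ℕ`) with entries in `{1,…,N}`:
`T i j` is the entry in row `i`, column `j` (`1`-based), `T` vanishes outside
the diagram, rows weakly increase, columns strictly increase. -/
def TabOK (N : ℕ) (lam : ℕ → ℕ) (T : ℕ → ℕ → ℕ) : Prop :=
  (∀ i j : ℕ, (i = 0 ∨ N < i ∨ j = 0 ∨ lam i < j) → T i j = 0) ∧
    (∀ i ∈ Icc 1 N, ∀ j : ℕ, 1 ≤ j → j ≤ lam i → 1 ≤ T i j ∧ T i j ≤ N) ∧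
    (∀ i ∈ Icc 1 N, ∀ j : ℕ, 1 ≤ j → j + 1 ≤ lam i → T i j ≤ T i (j + 1)) ∧
    (∀ i : ℕ, 1 ≤ i → i + 1 ≤ N → ∀ j : ℕ, 1 ≤ j → j ≤ lam (i + 1) → T i j < T (i + 1) j)

/-- The factorial weight `∏_{(i,j)∈λ} (x_{T(i,j)} + y_{T(i,j)+j-i})` of a
tableau. -/
def tabWt (N : ℕ) (lam : ℕ → ℕ) (x y : ℕ → ℂ) (T : ℕ → ℕ → ℕ) : ℂ :=
  ∏ i ∈ Icc 1 N, ∏ j ∈ Icc 1 (lam i), (x (T i j) + y (T i j + j - i))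

/-- A five vertex path configuration in the half-infinite strip
`ℤ_{≥1} × {1,…,N}` with paths entering from the bottom at the positions
`S(λ) = {λ_t + N - t + 1 : 1 ≤ t ≤ N}` and exiting through the right boundary
(left and top boundaries empty; the vertex `(1,1;1,1)` forbidden).  The
configuration is encoded by the vertical edge occupancies: `g k t` is the
`t`-th largest occupied column between row `k` and row `k + 1`
(`k = 0` being the bottom boundary); level `k` carries `N - k` paths, one path
exits to the right in each row, and the five vertex (non-crossing) condition
reads `g (k-1) (t+1) ≤ g k t < g (k-1) t`. -/
def ConfOK (N : ℕ) (lam : ℕ → ℕ) (g : ℕ → ℕ → ℕ) : Prop :=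
  (∀ k t : ℕ, (N < k ∨ t = 0 ∨ N - k < t) → g k t = 0) ∧
    (∀ t ∈ Icc 1 N, g 0 t = lam t + (N - t) + 1) ∧
    ∀ k ∈ Icc 1 N, ∀ t ∈ Icc 1 (N - k), g (k - 1) (t + 1) ≤ g k t ∧ g k t < g (k - 1) t

/-- The weight of a configuration: the product over all empty vertices `(c, k)`
(row `k`, column `c`) of `x_{N+1-k} + y_c`; all other admissible vertex weights
are `1`.  The empty columns of row `k` are the gaps
`g k t < c < g (k-1) t`, `t = 1, …, N - k + 1`. -/
def confWt (N : ℕ) (x y : ℕ → ℂ) (g : ℕ → ℕ → ℕ) : ℂ :=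
  ∏ k ∈ Icc 1 N, ∏ t ∈ Icc 1 (N - k + 1),
    ∏ c ∈ Finset.Ioo (g k t) (g (k - 1) t), (x (N + 1 - k) + y c)

/-!
The entries `≤ m` of a tableau `T` form a Young diagram `λ⁽ᵐ⁾` with at most `m` rows, and
consecutive diagrams interlace: `λ⁽ᵐ⁺¹⁾_{t+1} ≤ λ⁽ᵐ⁾_t ≤ λ⁽ᵐ⁺¹⁾_t`. The staircase shift
`g k t = λ⁽ᴺ⁻ᵏ⁾_t + (N - k - t) + 1` turns this chain into strictly decreasing path positions,
and interlacing becomes exactly the five vertex condition; conversely `T` is recovered from the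
diagrams as `T t j = #{m < N | λ⁽ᵐ⁾_t < j}`. The boxes of `λ⁽ᵐ⁾ / λ⁽ᵐ⁻¹⁾` in row `t` all carry
the entry `m`, and shifted by `m - t` they are exactly the empty vertices of row `N + 1 - m`
between the `t`-th path at the two adjacent levels, so the weights agree gap by gap.
-/

namespace FiveVertex

section Counting

lemma le_card_filter_iff_of_monotoneOn {f : ℕ → ℕ} {L j m : ℕ}
    (hf : MonotoneOn f (Set.Icc 1 L)) (hj : j ∈ Icc 1 L) :
    j ≤ #{i ∈ Icc 1 L | f i ≤ m} ↔ f j ≤ m := by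
  rw [mem_Icc] at hj
  constructor
  · intro h
    by_contra! hm
    have hsub : {i ∈ Icc 1 L | f i ≤ m} ⊆ Icc 1 (j - 1) := by
      intro i hi
      simp only [mem_filter, mem_Icc] at hi ⊢
      by_contra! hji
      have := hf hj hi.1 (by omega)
      omega
    have := card_le_card hsub
    simp only [Nat.card_Icc] at this
    omega
  · intro h
    have hsub : Icc 1 j ⊆ {i ∈ Icc 1 L | f i ≤ m} := by
      intro i hi
      simp only [mem_filter, mem_Icc] at hi ⊢
      exact ⟨⟨hi.1, hi.2.trans hj.2⟩, (hf ⟨hi.1, hi.2.trans hj.2⟩ hj hi.2).trans h⟩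
    simpa using card_le_card hsub

lemma card_filter_lt_le_iff_of_monotoneOn {f : ℕ → ℕ} {N j m : ℕ}
    (hf : MonotoneOn f (Set.Iic N)) (hj : j ≤ f N) (hm : m ≤ N) :
    #{i ∈ range N | f i < j} ≤ m ↔ j ≤ f m := by
  constructor
  · intro h
    by_contra! hfm
    have hmN : m ≠ N := by rintro rfl; omega
    have hsub : range (m + 1) ⊆ {i ∈ range N | f i < j} := by
      intro i hi
      simp only [mem_filter, mem_range] at hi ⊢
      exact ⟨by omega, (hf (by simp only [Set.mem_Iic]; omega) hm (by omega)).trans_lt hfm⟩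
    have := card_le_card hsub
    simp only [card_range] at this
    omega
  · intro h
    have hsub : {i ∈ range N | f i < j} ⊆ range m := by
      intro i hi
      simp only [mem_filter, mem_range] at hi ⊢
      by_contra! hmi
      have := hf hm (Set.mem_Iic.2 hi.1.le) hmi
      omega
    simpa using card_le_card hsub

lemma prod_Icc_prod_Ioc_of_antitone {M : Type*} [CommMonoid M] (f : ℕ → M) {b : ℕ → ℕ}
    (hb : Antitone b) (n : ℕ) :
    ∏ k ∈ Icc 1 n, ∏ j ∈ Ioc (b k) (b (k - 1)), f j = ∏ j ∈ Ioc (b n) (b 0), f j := by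
  induction n with
  | zero => simp
  | succ n ih =>
    rw [prod_Icc_succ_top (by omega), ih, Nat.add_sub_cancel, mul_comm,
      prod_Ioc_consecutive f (hb n.le_succ) (hb n.zero_le)]

end Counting

def tabShape (lam : ℕ → ℕ) (T : ℕ → ℕ → ℕ) (m t : ℕ) : ℕ :=
  #{j ∈ Icc 1 (lam t) | T t j ≤ m}

def tabToConf (N : ℕ) (lam : ℕ → ℕ) (T : ℕ → ℕ → ℕ) (k t : ℕ) : ℕ :=
  if 1 ≤ t ∧ t + k ≤ N then tabShape lam T (N - k) t + (N - k - t) + 1 else 0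

/-- Inverse of the staircase shift in `tabToConf`. -/
def confShape (N : ℕ) (g : ℕ → ℕ → ℕ) (m t : ℕ) : ℕ :=
  g (N - m) t - (m - t) - 1

def confToTab (N : ℕ) (lam : ℕ → ℕ) (g : ℕ → ℕ → ℕ) (t j : ℕ) : ℕ :=
  if t ∈ Icc 1 N ∧ j ∈ Icc 1 (lam t) then #{m ∈ range N | confShape N g m t < j} else 0

section Tableau

variable {N : ℕ} {lam : ℕ → ℕ} {T : ℕ → ℕ → ℕ}

lemma tabShape_mono (lam : ℕ → ℕ) (T : ℕ → ℕ → ℕ) (t : ℕ) :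
    Monotone fun m => tabShape lam T m t :=
  fun _ _ hm => card_le_card (monotone_filter_right _ fun _ _ h => h.trans hm)

lemma tabShape_le (m t : ℕ) : tabShape lam T m t ≤ lam t := by
  simpa [tabShape] using card_filter_le (Icc 1 (lam t)) fun j => T t j ≤ m

lemma _root_.TabOK.monotoneOn_row (hT : TabOK N lam T) {t : ℕ} (ht : t ∈ Icc 1 N) :
    MonotoneOn (T t) (Set.Icc 1 (lam t)) :=
  monotoneOn_of_le_add_one Set.ordConnected_Icc fun j _ hj hj' => hT.2.2.1 t ht j hj.1 hj'.2

lemma _root_.TabOK.le_apply (hlam : AntitoneOn lam (Set.Icc 1 N))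
    (hT : TabOK N lam T) {t j : ℕ} (ht : t ∈ Icc 1 N) (hj : j ∈ Icc 1 (lam t)) :
    t ≤ T t j := by
  rw [mem_Icc] at ht hj
  induction t with
  | zero => omega
  | succ t ih =>
    obtain rfl | ht1 := Nat.eq_zero_or_pos t
    · exact (hT.2.1 1 (mem_Icc.2 ht) j hj.1 hj.2).1
    have hlt := hT.2.2.2 t ht1 ht.2 j hj.1 hj.2
    have := ih ⟨ht1, by omega⟩ ⟨hj.1, hj.2.trans (hlam ⟨ht1, by omega⟩ ⟨by omega, ht.2⟩ t.le_succ)⟩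
    omega

lemma le_tabShape_iff (hT : TabOK N lam T) {m t j : ℕ} (ht : t ∈ Icc 1 N)
    (hj : j ∈ Icc 1 (lam t)) : j ≤ tabShape lam T m t ↔ T t j ≤ m :=
  le_card_filter_iff_of_monotoneOn (hT.monotoneOn_row ht) hj

lemma tabShape_self (hT : TabOK N lam T) {t : ℕ} (ht : t ∈ Icc 1 N) :
    tabShape lam T N t = lam t := by
  rw [tabShape, filter_true_of_mem fun j hj =>
    (hT.2.1 t ht j (mem_Icc.1 hj).1 (mem_Icc.1 hj).2).2, Nat.card_Icc, Nat.add_sub_cancel]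

lemma tabShape_eq_zero (hlam : AntitoneOn lam (Set.Icc 1 N))
    (hT : TabOK N lam T) {m t : ℕ} (ht : t ∈ Icc 1 N) (hm : m < t) : tabShape lam T m t = 0 := by
  rw [tabShape, card_eq_zero, filter_eq_empty_iff]
  intro j hj
  have := hT.le_apply hlam ht hj
  omega

lemma tabShape_interlace (hlam : AntitoneOn lam (Set.Icc 1 N))
    (hT : TabOK N lam T) {m t : ℕ} (ht : 1 ≤ t) (htN : t + 1 ≤ N) :
    tabShape lam T (m + 1) (t + 1) ≤ tabShape lam T m t := by
  set j := tabShape lam T (m + 1) (t + 1)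
  obtain hj0 | hj0 := Nat.eq_zero_or_pos j
  · omega
  have hj : j ∈ Icc 1 (lam (t + 1)) := mem_Icc.2 ⟨hj0, tabShape_le _ _⟩
  have hTj : T (t + 1) j ≤ m + 1 := (le_tabShape_iff hT (mem_Icc.2 ⟨by omega, htN⟩) hj).1 le_rfl
  have hcol := hT.2.2.2 t ht htN j hj0 (mem_Icc.1 hj).2
  refine (le_tabShape_iff hT (mem_Icc.2 ⟨ht, by omega⟩) ?_).2 (by omega)
  exact mem_Icc.2 ⟨hj0, (mem_Icc.1 hj).2.trans (hlam ⟨ht, by omega⟩ ⟨by omega, htN⟩ t.le_succ)⟩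

lemma tabToConf_eq (hlam : AntitoneOn lam (Set.Icc 1 N))
    (hT : TabOK N lam T) {k t : ℕ} (ht : t ∈ Icc 1 N) (hk : t + k ≤ N + 1) :
    tabToConf N lam T k t = tabShape lam T (N - k) t + (N + 1 - k - t) := by
  have := mem_Icc.1 ht
  unfold tabToConf
  split_ifs with h
  · omega
  · rw [tabShape_eq_zero hlam hT ht (by omega)]
    omega

lemma tabToConf_confOK (hlam : AntitoneOn lam (Set.Icc 1 N))
    (hT : TabOK N lam T) : ConfOK N lam (tabToConf N lam T) := by
  refine ⟨fun k t h => if_neg (by omega), fun t ht => ?_, fun k hk t ht => ?_⟩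
  · have := mem_Icc.1 ht
    rw [tabToConf_eq hlam hT ht (by omega), Nat.sub_zero, tabShape_self hT ht]
    omega
  · rw [mem_Icc] at hk ht
    have hN : N - (k - 1) = N - k + 1 := by omega
    rw [tabToConf_eq hlam hT (mem_Icc.2 ⟨by omega, by omega⟩) (by omega),
      tabToConf_eq hlam hT (mem_Icc.2 ⟨ht.1, by omega⟩) (by omega),
      tabToConf_eq hlam hT (mem_Icc.2 ⟨ht.1, by omega⟩) (by omega), hN]
    have := tabShape_interlace (m := N - k) hlam hT ht.1 (by omega)
    have : tabShape lam T (N - k) t ≤ tabShape lam T (N - k + 1) t :=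
      tabShape_mono lam T t (N - k).le_succ
    omega

end Tableau

section Configuration

variable {N : ℕ} {lam : ℕ → ℕ} {g : ℕ → ℕ → ℕ}

lemma _root_.ConfOK.lt_apply (hg : ConfOK N lam g) :
    ∀ k ≤ N, ∀ t ∈ Icc 1 (N - k), N - k - t < g k t := by
  intro k
  induction k with
  | zero =>
    intro _ t ht
    rw [hg.2.1 t (by simpa using ht)]
    omega
  | succ k ih =>
    intro hk t ht
    rw [mem_Icc] at ht
    have hle := (hg.2.2 (k + 1) (mem_Icc.2 ⟨by omega, hk⟩) t (mem_Icc.2 ht)).1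
    have := ih (by omega) (t + 1) (mem_Icc.2 ⟨by omega, by omega⟩)
    rw [Nat.add_sub_cancel] at hle
    omega

lemma confShape_add (hg : ConfOK N lam g) {m t : ℕ} (ht : 1 ≤ t) (htm : t ≤ m) (hm : m ≤ N) :
    confShape N g m t + (m - t) + 1 = g (N - m) t := by
  have := hg.lt_apply (N - m) (by omega) t (mem_Icc.2 ⟨ht, by omega⟩)
  rw [confShape]
  omega

lemma confShape_eq_zero (hg : ConfOK N lam g) {m t : ℕ} (hm : m < t) : confShape N g m t = 0 := by
  rw [confShape, hg.1 (N - m) t (by omega), Nat.zero_sub, Nat.zero_sub]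

lemma confShape_self (hg : ConfOK N lam g) {t : ℕ} (ht : t ∈ Icc 1 N) :
    confShape N g N t = lam t := by
  rw [confShape, Nat.sub_self, hg.2.1 t ht]
  omega

lemma confShape_monotoneOn (hg : ConfOK N lam g) {t : ℕ} (ht : 1 ≤ t) :
    MonotoneOn (fun m => confShape N g m t) (Set.Iic N) := by
  refine monotoneOn_of_le_add_one Set.ordConnected_Iic fun m _ _ hm => ?_
  rw [Set.mem_Iic] at hm
  obtain hmt | htm := lt_or_ge m t
  · simp only [confShape_eq_zero hg hmt, zero_le]
  have hlt := (hg.2.2 (N - m) (mem_Icc.2 ⟨by omega, by omega⟩) t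
    (mem_Icc.2 ⟨ht, by omega⟩)).2
  rw [show N - m - 1 = N - (m + 1) by omega, ← confShape_add hg ht htm (by omega),
    ← confShape_add hg ht (by omega) hm] at hlt
  omega

lemma confShape_interlace (hg : ConfOK N lam g) {m t : ℕ} (ht : 1 ≤ t) (hm : m + 1 ≤ N) :
    confShape N g (m + 1) (t + 1) ≤ confShape N g m t := by
  obtain hmt | htm := lt_or_ge m t
  · simp only [confShape_eq_zero hg (Nat.succ_lt_succ hmt), zero_le]
  have hle := (hg.2.2 (N - m) (mem_Icc.2 ⟨by omega, by omega⟩) t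
    (mem_Icc.2 ⟨ht, by omega⟩)).1
  rw [show N - m - 1 = N - (m + 1) by omega, ← confShape_add hg ht htm (by omega),
    ← confShape_add hg (by omega) (by omega) hm] at hle
  omega

lemma confToTab_le_iff (hg : ConfOK N lam g) {m t j : ℕ} (ht : t ∈ Icc 1 N)
    (hj : j ∈ Icc 1 (lam t)) (hm : m ≤ N) :
    confToTab N lam g t j ≤ m ↔ j ≤ confShape N g m t := by
  rw [confToTab, if_pos ⟨ht, hj⟩]
  refine card_filter_lt_le_iff_of_monotoneOn (confShape_monotoneOn hg (mem_Icc.1 ht).1) ?_ hm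
  rw [confShape_self hg ht]
  exact (mem_Icc.1 hj).2

lemma confToTab_mem_Icc (hg : ConfOK N lam g) {t j : ℕ} (ht : t ∈ Icc 1 N)
    (hj : j ∈ Icc 1 (lam t)) : confToTab N lam g t j ∈ Icc 1 N := by
  have hpos : ¬ confToTab N lam g t j ≤ 0 := by
    rw [confToTab_le_iff hg ht hj N.zero_le, confShape_eq_zero hg (mem_Icc.1 ht).1]
    have := (mem_Icc.1 hj).1
    omega
  have hle : confToTab N lam g t j ≤ N := by
    rw [confToTab_le_iff hg ht hj le_rfl, confShape_self hg ht]
    exact (mem_Icc.1 hj).2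
  exact mem_Icc.2 ⟨by omega, hle⟩

lemma confToTab_tabOK (hlam : AntitoneOn lam (Set.Icc 1 N))
    (hg : ConfOK N lam g) : TabOK N lam (confToTab N lam g) := by
  refine ⟨fun i j h => if_neg (by simp only [mem_Icc]; omega),
    fun t ht j hj hj' => mem_Icc.1 (confToTab_mem_Icc hg ht (mem_Icc.2 ⟨hj, hj'⟩)),
    fun t ht j hj hj' => ?_, fun t ht htN j hj hj' => ?_⟩
  · rw [confToTab, if_pos ⟨ht, mem_Icc.2 ⟨hj, by omega⟩⟩,
      confToTab, if_pos ⟨ht, mem_Icc.2 ⟨by omega, hj'⟩⟩]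
    exact card_le_card (monotone_filter_right _ fun _ _ h => Nat.lt_succ_of_lt h)
  · have ht' : t + 1 ∈ Icc 1 N := mem_Icc.2 ⟨by omega, htN⟩
    have hjt : j ∈ Icc 1 (lam (t + 1)) := mem_Icc.2 ⟨hj, hj'⟩
    have hc := mem_Icc.1 (confToTab_mem_Icc hg ht' hjt)
    have hjc := (confToTab_le_iff hg ht' hjt hc.2).1 le_rfl
    have hint := confShape_interlace hg ht (m := confToTab N lam g (t + 1) j - 1) (by omega)
    rw [Nat.sub_add_cancel hc.1] at hint
    have hj_row : j ∈ Icc 1 (lam t) :=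
      mem_Icc.2 ⟨hj, hj'.trans (hlam ⟨ht, by omega⟩ ⟨by omega, htN⟩ t.le_succ)⟩
    have : confToTab N lam g t j ≤ confToTab N lam g (t + 1) j - 1 :=
      (confToTab_le_iff hg (mem_Icc.2 ⟨ht, by omega⟩) hj_row (by omega)).2 (by omega)
    omega

end Configuration

section Bijection

variable {N : ℕ} {lam : ℕ → ℕ}

lemma confShape_tabToConf (hlam : AntitoneOn lam (Set.Icc 1 N))
    {T : ℕ → ℕ → ℕ} (hT : TabOK N lam T) {m t : ℕ} (ht : t ∈ Icc 1 N) (hm : m ≤ N) :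
    confShape N (tabToConf N lam T) m t = tabShape lam T m t := by
  obtain hmt | htm := lt_or_ge m t
  · rw [confShape_eq_zero (tabToConf_confOK hlam hT) hmt, tabShape_eq_zero hlam hT ht hmt]
  rw [confShape, tabToConf_eq hlam hT ht (by omega), Nat.sub_sub_self hm]
  omega

lemma confToTab_tabToConf (hlam : AntitoneOn lam (Set.Icc 1 N))
    {T : ℕ → ℕ → ℕ} (hT : TabOK N lam T) : confToTab N lam (tabToConf N lam T) = T := by
  funext t j
  by_cases h : t ∈ Icc 1 N ∧ j ∈ Icc 1 (lam t)
  · obtain ⟨ht, hj⟩ := h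
    have hg := tabToConf_confOK hlam hT
    have hiff : ∀ m ≤ N, confToTab N lam (tabToConf N lam T) t j ≤ m ↔ T t j ≤ m :=
      fun m hm => by
        rw [confToTab_le_iff hg ht hj hm, confShape_tabToConf hlam hT ht hm,
          le_tabShape_iff hT ht hj]
    have hTN := (hT.2.1 t ht j (mem_Icc.1 hj).1 (mem_Icc.1 hj).2).2
    exact le_antisymm ((hiff _ hTN).2 le_rfl)
      ((hiff _ (mem_Icc.1 (confToTab_mem_Icc hg ht hj)).2).1 le_rfl)
  · rw [confToTab, if_neg h]
    simp only [mem_Icc, not_and_or, not_le] at h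
    exact (hT.1 t j (by omega)).symm

lemma tabShape_confToTab {g : ℕ → ℕ → ℕ} (hg : ConfOK N lam g) {m t : ℕ} (ht : t ∈ Icc 1 N)
    (hm : m ≤ N) : tabShape lam (confToTab N lam g) m t = confShape N g m t := by
  have hle : confShape N g m t ≤ lam t :=
    confShape_self hg ht ▸ confShape_monotoneOn hg (mem_Icc.1 ht).1 hm (Set.mem_Iic.2 le_rfl) hm
  have hfilter : {j ∈ Icc 1 (lam t) | confToTab N lam g t j ≤ m} = Icc 1 (confShape N g m t) := by
    ext j
    simp only [mem_filter]
    constructor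
    · exact fun ⟨hj, hjm⟩ => mem_Icc.2 ⟨(mem_Icc.1 hj).1, (confToTab_le_iff hg ht hj hm).1 hjm⟩
    · intro hj
      have hj' : j ∈ Icc 1 (lam t) := mem_Icc.2 ⟨(mem_Icc.1 hj).1, (mem_Icc.1 hj).2.trans hle⟩
      exact ⟨hj', (confToTab_le_iff hg ht hj' hm).2 (mem_Icc.1 hj).2⟩
  rw [tabShape, hfilter, Nat.card_Icc, Nat.add_sub_cancel]

lemma tabToConf_confToTab {g : ℕ → ℕ → ℕ} (hg : ConfOK N lam g) :
    tabToConf N lam (confToTab N lam g) = g := by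
  funext k t
  by_cases h : 1 ≤ t ∧ t + k ≤ N
  · rw [tabToConf, if_pos h, tabShape_confToTab hg (mem_Icc.2 ⟨h.1, by omega⟩) (by omega)]
    have := confShape_add hg h.1 (m := N - k) (by omega) (by omega)
    rw [Nat.sub_sub_self (by omega)] at this
    omega
  · rw [tabToConf, if_neg h]
    exact (hg.1 k t (by omega)).symm

def tabConfEquiv (N : ℕ) (lam : ℕ → ℕ)
    (hlam : AntitoneOn lam (Set.Icc 1 N)) :
    {T : ℕ → ℕ → ℕ // TabOK N lam T} ≃ {g : ℕ → ℕ → ℕ // ConfOK N lam g} where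
  toFun T := ⟨tabToConf N lam T, tabToConf_confOK hlam T.2⟩
  invFun g := ⟨confToTab N lam g, confToTab_tabOK hlam g.2⟩
  left_inv T := Subtype.ext (confToTab_tabToConf hlam T.2)
  right_inv g := Subtype.ext (tabToConf_confToTab g.2)

end Bijection

section Weight

variable {N : ℕ} {lam : ℕ → ℕ} {T : ℕ → ℕ → ℕ}

lemma prod_gap_tabToConf (hlam : AntitoneOn lam (Set.Icc 1 N))
    (hT : TabOK N lam T) (x y : ℕ → ℂ) {k t : ℕ} (ht : t ∈ Icc 1 N)
    (hk : k ∈ Icc 1 (N - t + 1)) :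
    ∏ c ∈ Ioo (tabToConf N lam T k t) (tabToConf N lam T (k - 1) t), (x (N + 1 - k) + y c) =
      ∏ j ∈ Ioc (tabShape lam T (N - k) t) (tabShape lam T (N - (k - 1)) t),
        (x (T t j) + y (T t j + j - t)) := by
  have := mem_Icc.1 ht
  rw [mem_Icc] at hk
  have hgap : Ioo (tabToConf N lam T k t) (tabToConf N lam T (k - 1) t) =
      (Ioc (tabShape lam T (N - k) t) (tabShape lam T (N - (k - 1)) t)).map
        (addRightEmbedding (N + 1 - k - t)) := by
    rw [map_add_right_Ioc, tabToConf_eq hlam hT ht (by omega),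
      tabToConf_eq hlam hT ht (by omega)]
    ext c
    simp only [mem_Ioo, mem_Ioc]
    omega
  rw [hgap, prod_map]
  refine prod_congr rfl fun j hj => ?_
  rw [mem_Ioc] at hj
  have hj' : j ∈ Icc 1 (lam t) := mem_Icc.2 ⟨by omega, hj.2.trans (tabShape_le _ _)⟩
  have hle := (le_tabShape_iff hT ht hj').1 hj.2
  have hgt := mt (le_tabShape_iff (m := N - k) hT ht hj').2 (by omega)
  rw [addRightEmbedding_apply, show T t j = N + 1 - k by omega]
  congr 2
  omega

lemma prod_row_tabToConf (hlam : AntitoneOn lam (Set.Icc 1 N))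
    (hT : TabOK N lam T) (x y : ℕ → ℂ) {t : ℕ} (ht : t ∈ Icc 1 N) :
    ∏ k ∈ Icc 1 (N - t + 1),
        ∏ c ∈ Ioo (tabToConf N lam T k t) (tabToConf N lam T (k - 1) t), (x (N + 1 - k) + y c) =
      ∏ j ∈ Icc 1 (lam t), (x (T t j) + y (T t j + j - t)) := by
  have hanti : Antitone fun k => tabShape lam T (N - k) t :=
    fun _ _ h => tabShape_mono lam T t (Nat.sub_le_sub_left h N)
  refine (prod_congr rfl fun k hk => prod_gap_tabToConf hlam hT x y ht hk).trans
    ((prod_Icc_prod_Ioc_of_antitone _ hanti _).trans ?_)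
  rw [Nat.sub_zero, tabShape_self hT ht,
    tabShape_eq_zero hlam hT ht (by have := mem_Icc.1 ht; omega), ← Icc_add_one_left_eq_Ioc,
    zero_add]

lemma confWt_tabToConf (hlam : AntitoneOn lam (Set.Icc 1 N))
    (hT : TabOK N lam T) (x y : ℕ → ℂ) :
    confWt N x y (tabToConf N lam T) = tabWt N lam x y T := by
  rw [confWt, tabWt, prod_comm' (t' := Icc 1 N) (s' := fun t => Icc 1 (N - t + 1))
    (fun k t => by simp only [mem_Icc]; omega)]
  exact prod_congr rfl fun t ht => prod_row_tabToConf hlam hT x y ht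

end Weight

end FiveVertex

open FiveVertex in
theorem factorial_schur_five_vertex_general (N : ℕ) (lam : ℕ → ℕ) (x y : ℕ → ℂ)
    (hlam : ∀ i j : ℕ, 1 ≤ i → i ≤ j → j ≤ N → lam j ≤ lam i) :
    (∃ e : {T : ℕ → ℕ → ℕ // TabOK N lam T} ≃ {g : ℕ → ℕ → ℕ // ConfOK N lam g},
        ∀ T : {T : ℕ → ℕ → ℕ // TabOK N lam T},
          confWt N x y (e T).1 = tabWt N lam x y T.1) ∧
      (∑' g : {g : ℕ → ℕ → ℕ // ConfOK N lam g}, confWt N x y g.1) =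
        ∑' T : {T : ℕ → ℕ → ℕ // TabOK N lam T}, tabWt N lam x y T.1 := by
  replace hlam : AntitoneOn lam (Set.Icc 1 N) := fun i hi j hj hij => hlam i j hi.1 hij hj.2
  have hwt (T : {T : ℕ → ℕ → ℕ // TabOK N lam T}) :
      confWt N x y (tabConfEquiv N lam hlam T).1 = tabWt N lam x y T.1 :=
    confWt_tabToConf hlam T.2 x y
  exact ⟨⟨tabConfEquiv N lam hlam, hwt⟩,
    ((tabConfEquiv N lam hlam).tsum_eq fun g => confWt N x y g.1).symm.trans (tsum_congr hwt)⟩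

/-- There is a weight-preserving bijection between semistandard Young tableaux
of shape `λ` with entries in `{1,…,N}` and five vertex path configurations as
above; consequently the partition function of the five vertex model equals the
factorial Schur polynomial `s_λ(x|y) = ∑_T ∏_{(i,j)∈λ}(x_{T(i,j)} + y_{T(i,j)+j-i})`. -/
theorem factorial_schur_five_vertex (N : ℕ) (lam : ℕ → ℕ) (x y : ℕ → ℂ)
    (hlam0 : ∀ i : ℕ, i = 0 ∨ N < i → lam i = 0)
    (hlam : ∀ i j : ℕ, 1 ≤ i → i ≤ j → j ≤ N → lam j ≤ lam i) :
    (∃ e : {T : ℕ → ℕ → ℕ // TabOK N lam T} ≃ {g : ℕ → ℕ → ℕ // ConfOK N lam g},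
        ∀ T : {T : ℕ → ℕ → ℕ // TabOK N lam T},
          confWt N x y (e T).1 = tabWt N lam x y T.1) ∧
      (∑' g : {g : ℕ → ℕ → ℕ // ConfOK N lam g}, confWt N x y g.1) =
        ∑' T : {T : ℕ → ℕ → ℕ // TabOK N lam T}, tabWt N lam x y T.1 :=
  factorial_schur_five_vertex_general N lam x y hlam
end
end
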